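/- arXiv:2407.19741 — 8 statements merged into one kernel-verified Lean document; each statement's English description precedes it below -/
import Mathlib

section
/- Let φ : [0,∞) → [0,∞) be a measurable probability density with ∫_0^∞ φ(s) ds = 1 and finite positive mean m = ∫_0^∞ s φ(s) ds ∈ (0,∞). Let (c_T)_{T>0} be reals with 0 < c_T < 1 for all T and lim_{T→∞} T(1 − c_T) = +∞. Define Ψ̂^T(t) = ∑_{k≥1} (c_T)^k φ^{*k}(t). Then Ψ̂^T(T·) converges weakly to 0: for every x ≥ 0 and every bounded continuous function g : [0,∞) → ℝ, lim_{T→∞} ∫_0^x g(u) Ψ̂^T(Tu) du = 0. -/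
/-!
Young's inequality in `L¹` gives `∫ |φ^{*k}| ≤ (∫ |φ|)^k = 1`, so `Ψ̂^T` has total mass at most
`∑_{k ≥ 1} c_T^k ≤ 1 / (1 - c_T)`. Substituting `t = T u` divides that mass by `T`, hence
`|∫_0^x g(u) Ψ̂^T(T u) du| ≤ sup |g| / (T (1 - c_T))`, which tends to `0`.
-/

open MeasureTheory Filter Topology

/-- Convolution powers: `convPow ψ n = ψ^{*(n+1)}`, i.e. `convPow ψ 0 = ψ` and
`convPow ψ (n+1) t = ∫_0^t ψ(t-s) ψ^{*(n+1)}(s) ds`. -/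
noncomputable def convPow (ψ : ℝ → ℝ) : ℕ → ℝ → ℝ
  | 0 => ψ
  | n + 1 => fun t => ∫ s in (0:ℝ)..t, ψ (t - s) * convPow ψ n s

open scoped ENNReal

theorem measurable_intervalIntegral_of_uncurry {f : ℝ → ℝ → ℝ}
    (hf : Measurable (Function.uncurry f)) (a : ℝ) :
    Measurable fun t => ∫ s in a..t, f t s := by
  have hIoc : ∀ S : Set (ℝ × ℝ), MeasurableSet S →
      Measurable fun t => ∫ s, {s | (t, s) ∈ S}.indicator (f t) s :=
    fun S hS => ((hf.indicator hS).stronglyMeasurable.integral_prod_right'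
      (ν := volume)).measurable
  have hS₁ : MeasurableSet {p : ℝ × ℝ | a < p.2 ∧ p.2 ≤ p.1} :=
    (measurableSet_lt measurable_const measurable_snd).inter
      (measurableSet_le measurable_snd measurable_fst)
  have hS₂ : MeasurableSet {p : ℝ × ℝ | p.1 < p.2 ∧ p.2 ≤ a} :=
    (measurableSet_lt measurable_fst measurable_snd).inter
      (measurableSet_le measurable_snd measurable_const)
  convert (hIoc _ hS₁).sub (hIoc _ hS₂) using 2 with t
  simp only [intervalIntegral, ← integral_indicator measurableSet_Ioc]
  rfl

theorem measurable_convPow {ψ : ℝ → ℝ} (hψ : Measurable ψ) (n : ℕ) :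
    Measurable (convPow ψ n) := by
  induction n with
  | zero => exact hψ
  | succ n ih =>
    exact measurable_intervalIntegral_of_uncurry (f := fun t s => ψ (t - s) * convPow ψ n s)
      ((hψ.comp (measurable_fst.sub measurable_snd)).mul (ih.comp measurable_snd)) 0

theorem enorm_convPow_succ_le (ψ : ℝ → ℝ) (n : ℕ) (t : ℝ) :
    ‖convPow ψ (n + 1) t‖ₑ ≤ ∫⁻ s, ‖ψ (t - s)‖ₑ * ‖convPow ψ n s‖ₑ := by
  calc ‖convPow ψ (n + 1) t‖ₑ
      = ‖∫ s in Set.uIoc 0 t, ψ (t - s) * convPow ψ n s‖ₑ := by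
        simp only [← ofReal_norm, convPow, intervalIntegral.norm_integral_eq_norm_integral_uIoc]
    _ ≤ ∫⁻ s in Set.uIoc 0 t, ‖ψ (t - s) * convPow ψ n s‖ₑ := enorm_integral_le_lintegral_enorm _
    _ ≤ ∫⁻ s, ‖ψ (t - s) * convPow ψ n s‖ₑ := setLIntegral_le_lintegral _ _
    _ = _ := by simp only [enorm_mul]

theorem lintegral_enorm_convPow_succ_le {ψ : ℝ → ℝ} (hψ : Measurable ψ) (n : ℕ) :
    ∫⁻ t, ‖convPow ψ (n + 1) t‖ₑ ≤ (∫⁻ t, ‖ψ t‖ₑ) * ∫⁻ t, ‖convPow ψ n t‖ₑ := by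
  have hmeas : Measurable fun p : ℝ × ℝ => ‖ψ (p.1 - p.2)‖ₑ * ‖convPow ψ n p.2‖ₑ :=
    (hψ.comp (measurable_fst.sub measurable_snd)).enorm.mul
      ((measurable_convPow hψ n).comp measurable_snd).enorm
  calc ∫⁻ t, ‖convPow ψ (n + 1) t‖ₑ
      ≤ ∫⁻ t, ∫⁻ s, ‖ψ (t - s)‖ₑ * ‖convPow ψ n s‖ₑ :=
        lintegral_mono (enorm_convPow_succ_le ψ n)
    _ = ∫⁻ s, ∫⁻ t, ‖ψ (t - s)‖ₑ * ‖convPow ψ n s‖ₑ :=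
        lintegral_lintegral_swap hmeas.aemeasurable
    _ = ∫⁻ s, (∫⁻ t, ‖ψ t‖ₑ) * ‖convPow ψ n s‖ₑ := by
        refine lintegral_congr fun s => ?_
        rw [lintegral_mul_const' _ _ enorm_ne_top,
          lintegral_sub_right_eq_self (fun t => ‖ψ t‖ₑ) s]
    _ = (∫⁻ t, ‖ψ t‖ₑ) * ∫⁻ t, ‖convPow ψ n t‖ₑ :=
        lintegral_const_mul _ (measurable_convPow hψ n).enorm

theorem lintegral_enorm_convPow_le {ψ : ℝ → ℝ} (hψ : Measurable ψ) (n : ℕ) :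
    ∫⁻ t, ‖convPow ψ n t‖ₑ ≤ (∫⁻ t, ‖ψ t‖ₑ) ^ (n + 1) := by
  induction n with
  | zero => simp [convPow]
  | succ n ih =>
    calc ∫⁻ t, ‖convPow ψ (n + 1) t‖ₑ ≤ (∫⁻ t, ‖ψ t‖ₑ) * ∫⁻ t, ‖convPow ψ n t‖ₑ :=
          lintegral_enorm_convPow_succ_le hψ n
      _ ≤ (∫⁻ t, ‖ψ t‖ₑ) * (∫⁻ t, ‖ψ t‖ₑ) ^ (n + 1) := by gcongr
      _ = (∫⁻ t, ‖ψ t‖ₑ) ^ (n + 1 + 1) := (pow_succ' _ _).symm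

theorem Real.lintegral_comp_mul_left (f : ℝ → ℝ≥0∞) {T : ℝ} (hT : T ≠ 0) :
    ∫⁻ u, f (T * u) = ENNReal.ofReal |T⁻¹| * ∫⁻ v, f v := by
  have := lintegral_map_equiv f (MeasurableEquiv.mulLeft₀ T hT) (μ := volume)
  rw [MeasurableEquiv.coe_mulLeft₀, Real.map_volume_mul_left hT, lintegral_smul_measure] at this
  exact this.symm

theorem lintegral_enorm_tsum_convPow_le {ψ : ℝ → ℝ} (hψ : Measurable ψ)
    (hψ1 : ∫⁻ t, ‖ψ t‖ₑ ≤ 1) (a : ℝ) :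
    ∫⁻ t, ‖∑' n, a ^ (n + 1) * convPow ψ n t‖ₑ ≤ ‖a‖ₑ * (1 - ‖a‖ₑ)⁻¹ := by
  calc ∫⁻ t, ‖∑' n, a ^ (n + 1) * convPow ψ n t‖ₑ
      ≤ ∫⁻ t, ∑' n, ‖a‖ₑ ^ (n + 1) * ‖convPow ψ n t‖ₑ := by
        refine lintegral_mono fun t => enorm_tsum_le_tsum_enorm.trans_eq ?_
        simp only [enorm_mul, enorm_pow]
    _ = ∑' n, ‖a‖ₑ ^ (n + 1) * ∫⁻ t, ‖convPow ψ n t‖ₑ := by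
        rw [lintegral_tsum fun n => ((measurable_convPow hψ n).enorm.const_mul _).aemeasurable]
        simp only [lintegral_const_mul' _ _ (ENNReal.pow_ne_top enorm_ne_top)]
    _ ≤ ∑' n, ‖a‖ₑ ^ (n + 1) := by
        refine ENNReal.tsum_le_tsum fun n => mul_le_of_le_one_right' ?_
        exact (lintegral_enorm_convPow_le hψ n).trans (pow_le_one₀ zero_le hψ1)
    _ = ‖a‖ₑ * (1 - ‖a‖ₑ)⁻¹ := ENNReal.tsum_geometric_add_one _

theorem enorm_intervalIntegral_mul_le {f g : ℝ → ℝ} {C : ℝ} (hg : ∀ u, |g u| ≤ C) (a b : ℝ) :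
    ‖∫ u in a..b, g u * f u‖ₑ ≤ ENNReal.ofReal C * ∫⁻ u, ‖f u‖ₑ := by
  calc ‖∫ u in a..b, g u * f u‖ₑ = ‖∫ u in Set.uIoc a b, g u * f u‖ₑ := by
        simp only [← ofReal_norm, intervalIntegral.norm_integral_eq_norm_integral_uIoc]
    _ ≤ ∫⁻ u in Set.uIoc a b, ‖g u * f u‖ₑ := enorm_integral_le_lintegral_enorm _
    _ ≤ ∫⁻ u, ‖g u * f u‖ₑ := setLIntegral_le_lintegral _ _
    _ ≤ ∫⁻ u, ENNReal.ofReal C * ‖f u‖ₑ := by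
        refine lintegral_mono fun u => ?_
        rw [enorm_mul, ← ofReal_norm (g u)]
        gcongr
        exact hg u
    _ = ENNReal.ofReal C * ∫⁻ u, ‖f u‖ₑ := lintegral_const_mul' _ _ ENNReal.ofReal_ne_top

theorem lintegral_enorm_eq_ofReal_setIntegral_Ioi {φ : ℝ → ℝ} (hφnonneg : ∀ s, 0 ≤ φ s)
    (hφneg : ∀ s < (0:ℝ), φ s = 0) (hφint : IntegrableOn φ (Set.Ioi 0)) :
    ∫⁻ t, ‖φ t‖ₑ = ENNReal.ofReal (∫ s in Set.Ioi (0:ℝ), φ s) := by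
  have hsupp : (fun t => ‖φ t‖ₑ).support ⊆ Set.Ici 0 := fun t ht => by
    by_contra h
    exact ht (by simp [hφneg t (not_le.1 h)])
  rw [← setLIntegral_eq_of_support_subset hsupp, setLIntegral_congr Ioi_ae_eq_Ici.symm,
    ← ofReal_integral_norm_eq_lintegral_enorm hφint]
  simp only [Real.norm_of_nonneg (hφnonneg _)]

theorem norm_intervalIntegral_mul_tsum_convPow_comp_mul_le {ψ g : ℝ → ℝ} (hψ : Measurable ψ)
    (hψ1 : ∫⁻ t, ‖ψ t‖ₑ ≤ 1) {C : ℝ} (hg : ∀ u, |g u| ≤ C) {a : ℝ} (ha0 : 0 ≤ a) (ha1 : a < 1)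
    {T : ℝ} (hT : 0 < T) (x : ℝ) :
    ‖∫ u in (0:ℝ)..x, g u * ∑' n, a ^ (n + 1) * convPow ψ n (T * u)‖ ≤ C * (T * (1 - a))⁻¹ := by
  have hC0 : 0 ≤ C := (abs_nonneg _).trans (hg 0)
  rw [← ENNReal.ofReal_le_ofReal_iff
    (mul_nonneg hC0 (inv_nonneg.2 (mul_nonneg hT.le (by linarith)))), ofReal_norm]
  calc ‖∫ u in (0:ℝ)..x, g u * ∑' n, a ^ (n + 1) * convPow ψ n (T * u)‖ₑ
      ≤ ENNReal.ofReal C * ∫⁻ u, ‖∑' n, a ^ (n + 1) * convPow ψ n (T * u)‖ₑ :=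
        enorm_intervalIntegral_mul_le hg 0 x
    _ = ENNReal.ofReal C *
          (ENNReal.ofReal |T⁻¹| * ∫⁻ t, ‖∑' n, a ^ (n + 1) * convPow ψ n t‖ₑ) := by
        rw [Real.lintegral_comp_mul_left (fun t => ‖∑' n, a ^ (n + 1) * convPow ψ n t‖ₑ) hT.ne']
    _ ≤ ENNReal.ofReal C * (ENNReal.ofReal |T⁻¹| * (‖a‖ₑ * (1 - ‖a‖ₑ)⁻¹)) := by
        gcongr
        exact lintegral_enorm_tsum_convPow_le hψ hψ1 a
    _ ≤ ENNReal.ofReal C * (ENNReal.ofReal |T⁻¹| * (1 - ‖a‖ₑ)⁻¹) := by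
        gcongr
        exact mul_le_of_le_one_left' (by simpa [Real.enorm_eq_ofReal ha0] using ha1.le)
    _ = ENNReal.ofReal (C * (T * (1 - a))⁻¹) := by
        rw [Real.enorm_eq_ofReal ha0, ← ENNReal.ofReal_one, ← ENNReal.ofReal_sub _ ha0,
          ← ENNReal.ofReal_inv_of_pos (by linarith), abs_of_pos (inv_pos.2 hT),
          ← ENNReal.ofReal_mul (inv_nonneg.2 hT.le), ← ENNReal.ofReal_mul hC0, mul_inv]

theorem stmt1_general
    (φ : ℝ → ℝ) (hφmeas : Measurable φ) (hφnonneg : ∀ s, 0 ≤ φ s)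
    (hφneg : ∀ s < (0:ℝ), φ s = 0)
    (hφint : IntegrableOn φ (Set.Ioi 0))
    (hφ1 : ∫ s in Set.Ioi (0:ℝ), φ s = 1)
    (c : ℝ → ℝ) (hc : ∀ T > 0, 0 < c T ∧ c T < 1)
    (hclim : Tendsto (fun T => T * (1 - c T)) atTop atTop)
    (Ψhat : ℝ → ℝ → ℝ)
    (hΨhat : ∀ T t, Ψhat T t = ∑' n : ℕ, (c T) ^ (n + 1) * convPow φ n t)
    (x : ℝ)
    (g : ℝ → ℝ) (hgbdd : ∃ C, ∀ u, |g u| ≤ C) :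
    Tendsto (fun T => ∫ u in (0:ℝ)..x, g u * Ψhat T (T * u)) atTop
      (𝓝 0) := by
  obtain ⟨C, hC⟩ := hgbdd
  have hφ_mass : ∫⁻ t, ‖φ t‖ₑ ≤ 1 := by
    rw [lintegral_enorm_eq_ofReal_setIntegral_Ioi hφnonneg hφneg hφint, hφ1, ENNReal.ofReal_one]
  have hbound : ∀ T > 0, ‖∫ u in (0:ℝ)..x, g u * Ψhat T (T * u)‖ ≤ C * (T * (1 - c T))⁻¹ :=
    fun T hT => by
      simpa only [hΨhat] using norm_intervalIntegral_mul_tsum_convPow_comp_mul_le hφmeas hφ_mass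
        hC (hc T hT).1.le (hc T hT).2 hT x
  have hlim : Tendsto (fun T => C * (T * (1 - c T))⁻¹) atTop (𝓝 0) := by
    simpa using hclim.inv_tendsto_atTop.const_mul C
  exact squeeze_zero_norm' ((eventually_gt_atTop 0).mono hbound) hlim

theorem stmt1
    (φ : ℝ → ℝ) (hφmeas : Measurable φ) (hφnonneg : ∀ s, 0 ≤ φ s)
    (hφneg : ∀ s < (0:ℝ), φ s = 0)
    (hφint : IntegrableOn φ (Set.Ioi 0))
    (hφ1 : ∫ s in Set.Ioi (0:ℝ), φ s = 1)
    (m : ℝ) (hm : 0 < m)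
    (hmint : IntegrableOn (fun s => s * φ s) (Set.Ioi 0))
    (hmval : ∫ s in Set.Ioi (0:ℝ), s * φ s = m)
    (c : ℝ → ℝ) (hc : ∀ T > 0, 0 < c T ∧ c T < 1)
    (hclim : Tendsto (fun T => T * (1 - c T)) atTop atTop)
    (Ψhat : ℝ → ℝ → ℝ)
    (hΨhat : ∀ T t, Ψhat T t = ∑' n : ℕ, (c T) ^ (n + 1) * convPow φ n t)
    (x : ℝ) (hx : 0 ≤ x)
    (g : ℝ → ℝ) (hgcont : Continuous g) (hgbdd : ∃ C, ∀ u, |g u| ≤ C) :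
    Tendsto (fun T => ∫ u in (0:ℝ)..x, g u * Ψhat T (T * u)) atTop
      (𝓝 0) :=
  stmt1_general φ hφmeas hφnonneg hφneg hφint hφ1 c hc hclim Ψhat hΨhat x g hgbdd
end

section
/- Let φ : [0,∞) → [0,∞) be a measurable probability density with ∫_0^∞ φ(s) ds = 1 and finite positive mean m = ∫_0^∞ s φ(s) ds ∈ (0,∞). For each T > 0 let (Ω, 𝔉, P) carry an i.i.d. sequence (X_i)_{i≥1} of random variables whose common law has density φ, and a random variable I^T with values in {1,2,…} satisfying P(I^T = k) = (1 − c_T) c_T^{k−1} for all k ≥ 1, independent of the sequence (X_i), where 0 < c_T < 1. If lim_{T→∞} T(1 − c_T) = λ for a fixed λ > 0, then X^T := (1/T) ∑_{i=1}^{I^T} X_i converges in distribution, as T → ∞, to the exponential distribution with rate λ/m (density (λ/m) e^{−(λ/m)x} on [0,∞)). -/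
open MeasureTheory Filter Topology Set ProbabilityTheory

/-!
Write `S n = X 1 + ⋯ + X n` and `θ = -log c`. Conditioning on `I = n` (independent of the `X i`)
gives `E g(S_I / T) = ∑ n, P(I = n) E g(S_n / T)`, and since a geometric variable of parameter `c`
has the law of `⌈Z / θ⌉₊` for a standard exponential `Z`, this equals
`∫₀^∞ E g(S_{⌈u/θ⌉₊} / T) e^{-u} du`. As `T → ∞`, `T θ → λ`, so `⌈u/θ⌉₊ / T → u / λ`, and the strong
law gives `S_{⌈u/θ⌉₊} / T → m u / λ` almost surely. Dominated convergence, first in `ω` and then in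
`u`, yields `∫₀^∞ g(m u / λ) e^{-u} du`, the expectation of `g` under the exponential law of rate
`λ / m`.
-/

section DensityOnPositiveHalfLine

variable {φ : ℝ → ℝ} (hφm : Measurable φ) (hφ0 : ∀ s, 0 ≤ φ s) (hφneg : ∀ s < 0, φ s = 0)
include hφ0 hφneg

theorem toReal_ofReal_mul_eq_indicator_Ioi (s : ℝ) :
    (ENNReal.ofReal (φ s)).toReal * s = (Ioi 0).indicator (fun s => s * φ s) s := by
  rw [ENNReal.toReal_ofReal (hφ0 s), mul_comm]
  by_cases hs : 0 < s
  · rw [indicator_of_mem (mem_Ioi.2 hs)]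
  · rcases (not_lt.1 hs).lt_or_eq with hs | rfl
    · rw [indicator_of_notMem (fun h => lt_asymm hs (mem_Ioi.1 h)), hφneg s hs, mul_zero]
    · simp

include hφm in
theorem integrable_id_withDensity_ofReal (hint : IntegrableOn (fun s => s * φ s) (Ioi 0)) :
    Integrable id (volume.withDensity fun s => ENNReal.ofReal (φ s)) := by
  rw [integrable_withDensity_iff hφm.ennreal_ofReal (ae_of_all _ fun _ => ENNReal.ofReal_lt_top)]
  simpa only [id, mul_comm _ (ENNReal.toReal _), toReal_ofReal_mul_eq_indicator_Ioi hφ0 hφneg,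
    integrable_indicator_iff measurableSet_Ioi] using hint

include hφm in
theorem integral_id_withDensity_ofReal :
    ∫ x, x ∂(volume.withDensity fun s => ENNReal.ofReal (φ s)) = ∫ s in Ioi 0, s * φ s := by
  rw [integral_withDensity_eq_integral_toReal_smul hφm.ennreal_ofReal
    (ae_of_all _ fun _ => ENNReal.ofReal_lt_top)]
  simp only [smul_eq_mul, toReal_ofReal_mul_eq_indicator_Ioi hφ0 hφneg,
    integral_indicator measurableSet_Ioi]

end DensityOnPositiveHalfLine

theorem strong_law_ae_sum_Icc {Ω : Type*} [MeasurableSpace Ω] {P : Measure Ω}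
    {X : ℕ → Ω → ℝ} (hX : ∀ i, Measurable (X i)) (hind : iIndepFun X P)
    {μ : Measure ℝ} (hlaw : ∀ i, P.map (X i) = μ) (hint : Integrable (X 1) P) :
    ∀ᵐ ω ∂P, Tendsto (fun n : ℕ => (∑ i ∈ Finset.Icc 1 n, X i ω) / n) atTop
      (𝓝 (∫ ω, X 1 ω ∂P)) := by
  have hident : ∀ i, IdentDistrib (X (i + 1)) (X (0 + 1)) P P := fun i =>
    ⟨(hX _).aemeasurable, (hX _).aemeasurable, by rw [hlaw, hlaw]⟩
  filter_upwards [strong_law_ae_real (fun i => X (i + 1)) hint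
    (fun i j hij => hind.indepFun (by omega)) hident] with ω hω
  have hsum : ∀ n, ∑ i ∈ Finset.range n, X (i + 1) ω = ∑ i ∈ Finset.Icc 1 n, X i ω := fun n => by
    rw [Finset.range_eq_Ico, Finset.sum_Ico_add' (fun i => X i ω), zero_add,
      Finset.Ico_add_one_right_eq_Icc]
  simpa only [hsum] using hω

theorem strong_law_ae_sum_Icc_of_map_eq_withDensity {Ω : Type*} [MeasurableSpace Ω]
    {P : Measure Ω} {X : ℕ → Ω → ℝ} (hX : ∀ i, Measurable (X i)) (hind : iIndepFun X P)
    {φ : ℝ → ℝ} (hφm : Measurable φ) (hφ0 : ∀ s, 0 ≤ φ s) (hφneg : ∀ s < 0, φ s = 0)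
    (hint : IntegrableOn (fun s => s * φ s) (Ioi 0))
    (hlaw : ∀ i, P.map (X i) = volume.withDensity fun s => ENNReal.ofReal (φ s)) :
    ∀ᵐ ω ∂P, Tendsto (fun n : ℕ => (∑ i ∈ Finset.Icc 1 n, X i ω) / n) atTop
      (𝓝 (∫ s in Ioi 0, s * φ s)) := by
  have hint1 : Integrable (X 1) P :=
    (integrable_map_measure aestronglyMeasurable_id (hX 1).aemeasurable).1 <|
      (hlaw 1).symm ▸ integrable_id_withDensity_ofReal hφm hφ0 hφneg hint
  have hmean : ∫ ω, X 1 ω ∂P = ∫ s in Ioi 0, s * φ s := by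
    rw [← integral_id_withDensity_ofReal hφm hφ0 hφneg, ← hlaw 1]
    exact (integral_map (hX 1).aemeasurable aestronglyMeasurable_id).symm
  simpa only [hmean] using strong_law_ae_sum_Icc hX hind hlaw hint1

theorem ProbabilityTheory.IndepFun.integral_comp_eq_tsum {Ω ι β : Type*} [MeasurableSpace Ω]
    {P : Measure Ω} [IsProbabilityMeasure P] [Countable ι] [MeasurableSpace ι]
    [MeasurableSingletonClass ι] [MeasurableSpace β] {N : Ω → ι} {Y : Ω → β}
    (hN : Measurable N) (hY : Measurable Y) (hind : IndepFun N Y P)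
    {F : ι → β → ℝ} (hF : ∀ n, Measurable (F n)) {C : ℝ} (hC : ∀ n y, |F n y| ≤ C) :
    ∫ ω, F (N ω) (Y ω) ∂P = ∑' n, P.real (N ⁻¹' {n}) * ∫ ω, F n (Y ω) ∂P := by
  have hFm : Measurable (Function.uncurry F) := measurable_from_prod_countable_right hF
  calc ∫ ω, F (N ω) (Y ω) ∂P = ∫ p, Function.uncurry F p ∂(P.map fun ω => (N ω, Y ω)) :=
        (integral_map (hN.prodMk hY).aemeasurable hFm.aestronglyMeasurable).symm
    _ = ∫ n, ∫ y, F n y ∂(P.map Y) ∂(P.map N) := by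
        rw [hind.map_prod_eq_prod_map_map hN.aemeasurable hY.aemeasurable]
        exact integral_prod _ (Integrable.of_bound hFm.aestronglyMeasurable C
          (ae_of_all _ fun p => hC p.1 p.2))
    _ = ∑' n, P.real (N ⁻¹' {n}) * ∫ ω, F n (Y ω) ∂P := by
        have : IsProbabilityMeasure (P.map Y) := Measure.isProbabilityMeasure_map hY.aemeasurable
        have hbound : ∀ n, ‖∫ y, F n y ∂(P.map Y)‖ ≤ C := fun n => by
          simpa using norm_integral_le_of_norm_le_const (μ := P.map Y)
            (ae_of_all _ fun y => (Real.norm_eq_abs (F n y)).trans_le (hC n y))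
        rw [integral_countable (Integrable.of_bound (measurable_of_countable _).aestronglyMeasurable
          C (ae_of_all _ hbound))]
        simp only [map_measureReal_apply hN (measurableSet_singleton _), smul_eq_mul,
          integral_map hY.aemeasurable (hF _).aestronglyMeasurable]

theorem natCeil_div_eq_succ_iff {θ : ℝ} (hθ : 0 < θ) {u : ℝ} {k : ℕ} :
    ⌈u / θ⌉₊ = k + 1 ↔ u ∈ Ioc (k * θ) ((k + 1) * θ) := by
  simp only [Nat.ceil_eq_iff k.add_one_ne_zero, Nat.add_sub_cancel,
    mem_Ioc, lt_div_iff₀ hθ, div_le_iff₀ hθ, Nat.cast_add_one]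

theorem integral_Ioc_exp_neg {a b : ℝ} (hab : a ≤ b) :
    ∫ u in Ioc a b, Real.exp (-u) = Real.exp (-a) - Real.exp (-b) := by
  rw [← intervalIntegral.integral_of_le hab, intervalIntegral.integral_comp_neg fun x => Real.exp x,
    integral_exp]

theorem hasSum_geometric_mul_integral_natCeil {c : ℝ} (hc0 : 0 < c) (hc1 : c < 1)
    {b : ℕ → ℝ} {C : ℝ} (hb : ∀ k, |b k| ≤ C) :
    HasSum (fun k => (1 - c) * c ^ k * b (k + 1))
      (∫ u in Ioi 0, b ⌈u / -Real.log c⌉₊ * Real.exp (-u)) := by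
  set θ := -Real.log c
  have hθ : 0 < θ := neg_pos.2 (Real.log_neg hc0 hc1)
  have hexp : ∀ n : ℕ, Real.exp (-(n * θ)) = c ^ n := fun n => by
    rw [mul_neg, neg_neg, Real.exp_nat_mul, Real.exp_log hc0]
  set s : ℕ → Set ℝ := fun k => Ioc (k * θ) ((k + 1) * θ)
  have hunion : ⋃ k, s k = Ioi 0 := by
    ext u
    simp only [s, mem_iUnion, ← natCeil_div_eq_succ_iff hθ, mem_Ioi]
    rw [← div_pos_iff_of_pos_right hθ, ← Nat.ceil_pos, Nat.exists_eq_add_one]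
  have hdisj : Pairwise (Function.onFun Disjoint s) := fun k l hkl =>
    disjoint_left.2 fun u hk hl => hkl <| by
      rw [← natCeil_div_eq_succ_iff hθ] at hk hl
      omega
  have hint : IntegrableOn (fun u => b ⌈u / θ⌉₊ * Real.exp (-u)) (Ioi 0) := by
    refine ((integrableOn_exp_neg_Ioi 0).const_mul C).mono'
      ((measurable_of_countable b).comp (Nat.measurable_ceil.comp (measurable_id.div_const θ))
        |>.mul (by fun_prop)).aestronglyMeasurable (ae_of_all _ fun u => ?_)
    rw [norm_mul, Real.norm_eq_abs, Real.norm_of_nonneg (Real.exp_pos _).le]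
    exact mul_le_mul_of_nonneg_right (hb _) (Real.exp_pos _).le
  have hpiece : ∀ k, ∫ u in s k, b ⌈u / θ⌉₊ * Real.exp (-u) = (1 - c) * c ^ k * b (k + 1) := by
    intro k
    rw [setIntegral_congr_fun measurableSet_Ioc fun u hu => by
        rw [(natCeil_div_eq_succ_iff hθ).2 hu],
      integral_const_mul, integral_Ioc_exp_neg (by gcongr; linarith), hexp,
      show ((k : ℝ) + 1) = ((k + 1 : ℕ) : ℝ) by push_cast; rfl, hexp]
    ring
  rw [← hunion] at hint ⊢
  exact funext hpiece ▸ hasSum_integral_iUnion (fun k => measurableSet_Ioc) hdisj hint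

theorem hasSum_measureReal_mul_of_geometric {Ω : Type*} [MeasurableSpace Ω] {P : Measure Ω}
    {N : Ω → ℕ} {c : ℝ} (hc0 : 0 < c) (hc1 : c < 1) (hN : ∀ ω, 1 ≤ N ω)
    (hlaw : ∀ k : ℕ, 1 ≤ k → P {ω | N ω = k} = ENNReal.ofReal ((1 - c) * c ^ (k - 1)))
    {b : ℕ → ℝ} {C : ℝ} (hb : ∀ k, |b k| ≤ C) :
    HasSum (fun n => P.real (N ⁻¹' {n}) * b n)
      (∫ u in Ioi 0, b ⌈u / -Real.log c⌉₊ * Real.exp (-u)) := by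
  have hzero : N ⁻¹' {0} = ∅ := eq_empty_of_forall_notMem fun ω h => by
    have := hN ω
    rw [mem_preimage, mem_singleton_iff] at h
    omega
  have hsucc : ∀ k : ℕ, P.real (N ⁻¹' {k + 1}) = (1 - c) * c ^ k := fun k => by
    rw [measureReal_def, show N ⁻¹' {k + 1} = {ω | N ω = k + 1} from rfl,
      hlaw (k + 1) le_add_self, Nat.add_sub_cancel,
      ENNReal.toReal_ofReal (mul_nonneg (by linarith) (pow_nonneg hc0.le k))]
  rw [← hasSum_nat_add_iff' 1]
  simpa [hzero, hsucc] using hasSum_geometric_mul_integral_natCeil hc0 hc1 hb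

theorem tendsto_nhds_one_of_tendsto_mul_one_sub {c : ℝ → ℝ} {lam : ℝ}
    (h : Tendsto (fun T => T * (1 - c T)) atTop (𝓝 lam)) : Tendsto c atTop (𝓝 1) := by
  have h0 : Tendsto (fun T => T * (1 - c T) * T⁻¹) atTop (𝓝 0) := by
    simpa using h.mul tendsto_inv_atTop_zero
  have h1 : Tendsto (fun T => 1 - T * (1 - c T) * T⁻¹) atTop (𝓝 1) := by
    simpa using tendsto_const_nhds.sub h0
  refine h1.congr' ?_
  filter_upwards [eventually_gt_atTop 0] with T hT
  field_simp
  ring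

theorem tendsto_mul_neg_log_of_tendsto_mul_one_sub {c : ℝ → ℝ} {lam : ℝ}
    (hc : ∀ᶠ T in atTop, 0 < c T) (h : Tendsto (fun T => T * (1 - c T)) atTop (𝓝 lam)) :
    Tendsto (fun T => T * -Real.log (c T)) atTop (𝓝 lam) := by
  have hupper : Tendsto (fun T => T * (1 - c T) / c T) atTop (𝓝 lam) := by
    have := h.div (tendsto_nhds_one_of_tendsto_mul_one_sub h) one_ne_zero
    rwa [div_one] at this
  refine tendsto_of_tendsto_of_tendsto_of_le_of_le' h hupper ?_ ?_ <;>
    filter_upwards [hc, eventually_gt_atTop 0] with T hcT hT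
  · have := Real.log_le_sub_one_of_pos hcT
    gcongr
    linarith
  · have := Real.one_sub_inv_le_log_of_pos hcT
    rw [mul_div_assoc]
    gcongr
    rw [sub_div, div_self hcT.ne', one_div]
    linarith

theorem tendsto_natCeil_div_div {θ : ℝ → ℝ} {lam : ℝ} (hθ : ∀ᶠ T in atTop, 0 < θ T)
    (h : Tendsto (fun T => T * θ T) atTop (𝓝 lam)) (hlam : lam ≠ 0) {u : ℝ} (hu : 0 ≤ u) :
    Tendsto (fun T => (⌈u / θ T⌉₊ : ℝ) / T) atTop (𝓝 (u / lam)) := by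
  have hlower : Tendsto (fun T => u / (T * θ T)) atTop (𝓝 (u / lam)) :=
    tendsto_const_nhds.div h hlam
  have hupper : Tendsto (fun T => u / (T * θ T) + T⁻¹) atTop (𝓝 (u / lam)) := by
    simpa using hlower.add tendsto_inv_atTop_zero
  refine tendsto_of_tendsto_of_tendsto_of_le_of_le' hlower hupper ?_ ?_ <;>
    filter_upwards [hθ, eventually_gt_atTop 0] with T hθT hT
  · rw [mul_comm, ← div_div]
    gcongr
    exact Nat.le_ceil _
  · calc (⌈u / θ T⌉₊ : ℝ) / T ≤ (u / θ T + 1) / T := by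
          gcongr
          exact (Nat.ceil_lt_add_one (by positivity)).le
      _ = u / (T * θ T) + T⁻¹ := by
          field_simp

theorem tendsto_comp_div_of_tendsto_div {s : ℕ → ℝ} {m a : ℝ}
    (hs : Tendsto (fun n : ℕ => s n / n) atTop (𝓝 m)) {k : ℝ → ℕ}
    (hk : Tendsto (fun T => (k T : ℝ) / T) atTop (𝓝 a)) (ha : 0 < a) :
    Tendsto (fun T => s (k T) / T) atTop (𝓝 (m * a)) := by
  have hkR : Tendsto (fun T => (k T : ℝ) / T * T) atTop atTop :=
    hk.pos_mul_atTop ha tendsto_id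
  have hk_atTop : Tendsto k atTop atTop := by
    refine tendsto_natCast_atTop_iff.1 (hkR.congr' ?_)
    filter_upwards [eventually_ne_atTop 0] with T hT
    exact div_mul_cancel₀ _ hT
  refine ((hs.comp hk_atTop).mul hk).congr' ?_
  filter_upwards [hk_atTop.eventually_ne_atTop 0] with T hT
  simp only [Function.comp_apply]
  field_simp

theorem tendsto_integral_comp_div_of_ae_tendsto {Ω : Type*} [MeasurableSpace Ω]
    {P : Measure Ω} [IsProbabilityMeasure P] {S : ℕ → Ω → ℝ} (hS : ∀ n, Measurable (S n))
    {m : ℝ} (hlln : ∀ᵐ ω ∂P, Tendsto (fun n : ℕ => S n ω / n) atTop (𝓝 m))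
    {k : ℝ → ℕ} {a : ℝ} (hk : Tendsto (fun T => (k T : ℝ) / T) atTop (𝓝 a)) (ha : 0 < a)
    {g : ℝ → ℝ} (hg : Continuous g) {C : ℝ} (hC : ∀ x, |g x| ≤ C) :
    Tendsto (fun T => ∫ ω, g (S (k T) ω / T) ∂P) atTop (𝓝 (g (m * a))) := by
  have := tendsto_integral_filter_of_dominated_convergence (μ := P) (fun _ => C)
    (Eventually.of_forall fun T => (hg.measurable.comp ((hS _).div_const T)).aestronglyMeasurable)
    (Eventually.of_forall fun T => ae_of_all _ fun ω => hC _) (integrable_const C)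
    (hlln.mono fun ω hω => (hg.tendsto _).comp (tendsto_comp_div_of_tendsto_div hω hk ha))
  simpa using this

theorem tendsto_integral_Ioi_mul_exp_neg {ι : Type*} {l : Filter ι} [l.IsCountablyGenerated]
    {h : ι → ℝ → ℝ} {f : ℝ → ℝ} (hmeas : ∀ i, Measurable (h i)) {C : ℝ}
    (hC : ∀ i u, |h i u| ≤ C) (hlim : ∀ u > 0, Tendsto (fun i => h i u) l (𝓝 (f u))) :
    Tendsto (fun i => ∫ u in Ioi 0, h i u * Real.exp (-u)) l
      (𝓝 (∫ u in Ioi 0, f u * Real.exp (-u))) := by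
  refine tendsto_integral_filter_of_dominated_convergence (fun u => C * Real.exp (-u))
    (Eventually.of_forall fun i => ((hmeas i).mul (by fun_prop)).aestronglyMeasurable)
    (Eventually.of_forall fun i => ae_of_all _ fun u => ?_)
    ((integrableOn_exp_neg_Ioi 0).const_mul C)
    ((ae_restrict_iff' measurableSet_Ioi).2 (ae_of_all _ fun u hu =>
      (hlim u hu).mul tendsto_const_nhds))
  rw [norm_mul, Real.norm_eq_abs, Real.norm_of_nonneg (Real.exp_pos _).le]
  exact mul_le_mul_of_nonneg_right (hC i u) (Real.exp_pos _).le

theorem integral_Ioi_comp_mul_mul_exp_neg (f : ℝ → ℝ) {a : ℝ} (ha : 0 < a) :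
    ∫ u in Ioi 0, f (a * u) * Real.exp (-u)
      = ∫ x in Ioi 0, f x * (a⁻¹ * Real.exp (-a⁻¹ * x)) := by
  have := integral_comp_mul_left_Ioi (fun x => f x * Real.exp (-a⁻¹ * x)) 0 ha
  simp only [neg_mul, inv_mul_cancel_left₀ ha.ne', mul_zero, smul_eq_mul] at this
  rw [this, ← integral_const_mul]
  simp only [neg_mul, mul_left_comm]

theorem stmt2_general
    {Ω : Type*} [MeasurableSpace Ω] (P : Measure Ω) [IsProbabilityMeasure P]
    (φ : ℝ → ℝ) (hφmeas : Measurable φ) (hφnonneg : ∀ s, 0 ≤ φ s)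
    (hφneg : ∀ s < (0:ℝ), φ s = 0)
    (m : ℝ) (hm : 0 < m)
    (hmint : IntegrableOn (fun s => s * φ s) (Set.Ioi 0))
    (hmval : ∫ s in Set.Ioi (0:ℝ), s * φ s = m)
    (c : ℝ → ℝ) (hc : ∀ T > 0, 0 < c T ∧ c T < 1)
    (lam : ℝ) (hlam : 0 < lam)
    (hclim : Tendsto (fun T => T * (1 - c T)) atTop (𝓝 lam))
    -- the i.i.d. sequence (X_i) with common density φ
    (X : ℕ → Ω → ℝ) (hXmeas : ∀ i, Measurable (X i))
    (hXindep : ProbabilityTheory.iIndepFun X P)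
    (hXlaw : ∀ i, Measure.map (X i) P
      = (volume : Measure ℝ).withDensity fun s => ENNReal.ofReal (φ s))
    -- the geometric random variables I^T, independent of the sequence (X_i)
    (I : ℝ → Ω → ℕ) (hImeas : ∀ T, Measurable (I T))
    (hIpos : ∀ T, ∀ ω, 1 ≤ I T ω)
    (hIlaw : ∀ T > 0, ∀ k : ℕ, 1 ≤ k →
      P {ω | I T ω = k} = ENNReal.ofReal ((1 - c T) * c T ^ (k - 1)))
    (hIindep : ∀ T, ProbabilityTheory.IndepFun (I T) (fun ω i => X i ω) P) :
    -- convergence in distribution of X^T = (1/T) ∑_{i=1}^{I^T} X_i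
    -- to the exponential distribution with rate λ/m
    ∀ g : ℝ → ℝ, Continuous g → (∃ C, ∀ u, |g u| ≤ C) →
      Tendsto
        (fun T => ∫ ω, g ((1 / T) * ∑ i ∈ Finset.Icc 1 (I T ω), X i ω) ∂P) atTop
        (𝓝 (∫ x in Set.Ioi (0:ℝ), g x * ((lam / m) * Real.exp (-(lam / m) * x)))) := by
  rintro g hg ⟨C, hC⟩
  simp only [one_div_mul_eq_div]
  set S : ℕ → Ω → ℝ := fun n ω => ∑ i ∈ Finset.Icc 1 n, X i ω
  set b : ℝ → ℕ → ℝ := fun T n => ∫ ω, g (S n ω / T) ∂P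
  have hS : ∀ n, Measurable (S n) := fun n => Finset.measurable_sum _ fun i _ => hXmeas i
  have hb : ∀ T n, |b T n| ≤ C := fun T n => by
    simpa using norm_integral_le_of_norm_le_const (μ := P)
      (ae_of_all _ fun ω => (Real.norm_eq_abs _).trans_le (hC (S n ω / T)))
  have hlln : ∀ᵐ ω ∂P, Tendsto (fun n : ℕ => S n ω / n) atTop (𝓝 m) := hmval ▸
    strong_law_ae_sum_Icc_of_map_eq_withDensity hXmeas hXindep hφmeas hφnonneg hφneg hmint hXlaw
  have hrepr : ∀ T > 0, ∫ ω, g (S (I T ω) ω / T) ∂P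
      = ∫ u in Ioi 0, b T ⌈u / -Real.log (c T)⌉₊ * Real.exp (-u) := fun T hT =>
    (IndepFun.integral_comp_eq_tsum (hImeas T) (measurable_pi_lambda _ hXmeas) (hIindep T)
      (F := fun n y => g ((∑ i ∈ Finset.Icc 1 n, y i) / T)) (fun n => by fun_prop)
      (fun n y => hC _)).trans
    (hasSum_measureReal_mul_of_geometric (hc T hT).1 (hc T hT).2 (hIpos T) (hIlaw T hT)
      (hb T)).tsum_eq
  have hθ : Tendsto (fun T => T * -Real.log (c T)) atTop (𝓝 lam) :=
    tendsto_mul_neg_log_of_tendsto_mul_one_sub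
      ((eventually_gt_atTop 0).mono fun T hT => (hc T hT).1) hclim
  have hθpos : ∀ᶠ T in atTop, 0 < -Real.log (c T) :=
    (eventually_gt_atTop 0).mono fun T hT => neg_pos.2 (Real.log_neg (hc T hT).1 (hc T hT).2)
  have hlim : Tendsto (fun T => ∫ u in Ioi 0, b T ⌈u / -Real.log (c T)⌉₊ * Real.exp (-u)) atTop
      (𝓝 (∫ u in Ioi 0, g (m / lam * u) * Real.exp (-u))) := tendsto_integral_Ioi_mul_exp_neg
    (h := fun T u => b T ⌈u / -Real.log (c T)⌉₊) (fun T => (measurable_of_countable (b T)).comp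
      (Nat.measurable_ceil.comp (measurable_id.div_const _)))
    (fun T u => hb T _) fun u hu => by
      simpa only [mul_div_assoc', div_mul_eq_mul_div] using
        tendsto_integral_comp_div_of_ae_tendsto hS hlln
          (tendsto_natCeil_div_div hθpos hθ hlam.ne' hu.le) (div_pos hu hlam) hg hC
  rw [← inv_div, ← integral_Ioi_comp_mul_mul_exp_neg g (div_pos hm hlam)]
  exact hlim.congr' ((eventually_gt_atTop 0).mono fun T hT => (hrepr T hT).symm)

theorem stmt2
    {Ω : Type*} [MeasurableSpace Ω] (P : Measure Ω) [IsProbabilityMeasure P]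
    (φ : ℝ → ℝ) (hφmeas : Measurable φ) (hφnonneg : ∀ s, 0 ≤ φ s)
    (hφneg : ∀ s < (0:ℝ), φ s = 0)
    (hφint : IntegrableOn φ (Set.Ioi 0))
    (hφ1 : ∫ s in Set.Ioi (0:ℝ), φ s = 1)
    (m : ℝ) (hm : 0 < m)
    (hmint : IntegrableOn (fun s => s * φ s) (Set.Ioi 0))
    (hmval : ∫ s in Set.Ioi (0:ℝ), s * φ s = m)
    (c : ℝ → ℝ) (hc : ∀ T > 0, 0 < c T ∧ c T < 1)
    (lam : ℝ) (hlam : 0 < lam)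
    (hclim : Tendsto (fun T => T * (1 - c T)) atTop (𝓝 lam))
    -- the i.i.d. sequence (X_i) with common density φ
    (X : ℕ → Ω → ℝ) (hXmeas : ∀ i, Measurable (X i))
    (hXindep : ProbabilityTheory.iIndepFun X P)
    (hXlaw : ∀ i, Measure.map (X i) P
      = (volume : Measure ℝ).withDensity fun s => ENNReal.ofReal (φ s))
    -- the geometric random variables I^T, independent of the sequence (X_i)
    (I : ℝ → Ω → ℕ) (hImeas : ∀ T, Measurable (I T))
    (hIpos : ∀ T, ∀ ω, 1 ≤ I T ω)
    (hIlaw : ∀ T > 0, ∀ k : ℕ, 1 ≤ k →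
      P {ω | I T ω = k} = ENNReal.ofReal ((1 - c T) * c T ^ (k - 1)))
    (hIindep : ∀ T, ProbabilityTheory.IndepFun (I T) (fun ω i => X i ω) P) :
    -- convergence in distribution of X^T = (1/T) ∑_{i=1}^{I^T} X_i
    -- to the exponential distribution with rate λ/m
    ∀ g : ℝ → ℝ, Continuous g → (∃ C, ∀ u, |g u| ≤ C) →
      Tendsto
        (fun T => ∫ ω, g ((1 / T) * ∑ i ∈ Finset.Icc 1 (I T ω), X i ω) ∂P) atTop
        (𝓝 (∫ x in Set.Ioi (0:ℝ), g x * ((lam / m) * Real.exp (-(lam / m) * x)))) :=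
  stmt2_general P φ hφmeas hφnonneg hφneg m hm hmint hmval c hc lam hlam hclim X hXmeas hXindep
    hXlaw I hImeas hIpos hIlaw hIindep
end

section
/- Let φ : [0,∞) → [0,∞) be a measurable probability density with ∫_0^∞ φ(s) ds = 1 and finite positive mean m = ∫_0^∞ s φ(s) ds ∈ (0,∞), and let φ̂(z) = ∫_0^∞ e^{izs} φ(s) ds. Let (c_T)_{T>0} satisfy 0 < c_T < 1 and lim_{T→∞} T(1 − c_T) = λ for a fixed λ > 0. Then for every z ∈ ℝ, lim_{T→∞} (1 − c_T) φ̂(z/T) / (1 − c_T φ̂(z/T)) = 1 / (1 − i (m/λ) z). -/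
open MeasureTheory Filter Topology

/-!
A finite first moment makes `φ̂` differentiable with `φ̂ 0 = 1` and `φ̂' 0 = i m`, so
`T (φ̂ (z / T) - 1) → i m z`. Multiplying numerator and denominator by `T` and writing
`1 - c φ̂ = (1 - c) φ̂ - (φ̂ - 1)`, the numerator tends to `λ` and the denominator to `λ - i m z`,
which is nonzero because its real part is `λ > 0`.
-/

open Complex in
theorem hasDerivAt_integral_cexp_mul {μ : Measure ℝ} {f : ℝ → ℂ} (hf : Integrable f μ)
    (hsf : Integrable (fun s : ℝ => (s : ℂ) * f s) μ) (x : ℝ) :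
    HasDerivAt (fun x : ℝ => ∫ s, cexp (I * x * s) * f s ∂μ)
      (∫ s, I * s * cexp (I * x * s) * f s ∂μ) x := by
  have hexp : ∀ y : ℝ, Continuous fun s : ℝ => cexp (I * y * s) := fun y => by fun_prop
  have hexp_norm : ∀ y s : ℝ, ‖cexp (I * y * s)‖ = 1 := fun y s => by
    rw [show I * y * s = I * (y * s : ℝ) by push_cast; ring, norm_exp_I_mul_ofReal]
  have hmeas : ∀ y : ℝ, AEStronglyMeasurable (fun s : ℝ => cexp (I * y * s) * f s) μ :=
    fun y => (hexp y).aestronglyMeasurable.mul hf.aestronglyMeasurable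
  refine (hasDerivAt_integral_of_dominated_loc_of_deriv_le (x₀ := x)
    (F' := fun (y s : ℝ) => I * s * cexp (I * y * s) * f s)
    (bound := fun s : ℝ => ‖(s : ℂ) * f s‖) univ_mem (Eventually.of_forall hmeas)
    (hf.mono (hmeas x) (Eventually.of_forall fun s => by simp [hexp_norm])) ?_ ?_ hsf.norm ?_).2
  · refine ((hsf.aestronglyMeasurable.const_mul I).mul
      ((hexp x).aestronglyMeasurable (μ := μ))).congr (Eventually.of_forall fun s => ?_)
    simp only [Pi.mul_apply]
    ring
  · exact Eventually.of_forall fun s y _ => by simp [hexp_norm]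
  · refine Eventually.of_forall fun s y _ => ?_
    refine ((((hasDerivAt_id y).ofReal_comp.const_mul I).mul_const (s : ℂ)).cexp.mul_const
      (f s)).congr_deriv ?_
    simp only [id, ofReal_one, mul_one]
    ring

theorem HasDerivAt.tendsto_smul_sub_div_atTop {E : Type*} [NormedAddCommGroup E]
    [NormedSpace ℝ E] {g : ℝ → E} {g' : E} (hg : HasDerivAt g g' 0) (z : ℝ) :
    Tendsto (fun T : ℝ => T • (g (z / T) - g 0)) atTop (𝓝 (z • g')) := by
  have hgz : HasDerivAt (fun u => g (z * u)) (z • g') 0 := by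
    have hg' : HasDerivAt g g' (z * 0) := by rwa [mul_zero]
    simpa [Function.comp_def] using hg'.scomp (0 : ℝ) ((hasDerivAt_id (0 : ℝ)).const_mul z)
  have := hgz.tendsto_slope_zero_right.comp tendsto_inv_atTop_nhdsGT_zero
  simpa [Function.comp_def, div_eq_mul_inv] using this

theorem tendsto_one_sub_mul_div_one_sub_mul_atTop {c p : ℝ → ℂ} {l w : ℂ}
    (hc : Tendsto (fun T : ℝ => (T : ℂ) * (1 - c T)) atTop (𝓝 l))
    (hp : Tendsto (fun T : ℝ => (T : ℂ) * (p T - 1)) atTop (𝓝 w)) (hlw : l - w ≠ 0) :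
    Tendsto (fun T => (1 - c T) * p T / (1 - c T * p T)) atTop (𝓝 (l / (l - w))) := by
  have hT : ∀ᶠ T : ℝ in atTop, (T : ℂ) ≠ 0 :=
    (eventually_ne_atTop 0).mono fun T hT => Complex.ofReal_ne_zero.mpr hT
  have hinv : Tendsto (fun T : ℝ => (T : ℂ)⁻¹) atTop (𝓝 0) := by
    simpa using tendsto_inv_atTop_zero.ofReal
  have hp1 : Tendsto p atTop (𝓝 1) := by
    have := (hinv.mul hp).const_add 1
    rw [zero_mul, add_zero] at this
    refine this.congr' (hT.mono fun T hT => ?_)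
    field_simp
    ring
  have hnum := hc.mul hp1
  have hden := (hc.mul hp1).sub hp
  rw [mul_one] at hnum hden
  refine (hnum.div hden hlw).congr' (hT.mono fun T hT => ?_)
  simp only [Pi.div_apply]
  rw [mul_assoc, ← mul_sub, mul_div_mul_left _ _ hT]
  congr 1
  ring

theorem stmt6_general
    (φ : ℝ → ℝ)
    (hφint : IntegrableOn φ (Set.Ioi 0))
    (hφ1 : ∫ s in Set.Ioi (0:ℝ), φ s = 1)
    (m : ℝ)
    (hmint : IntegrableOn (fun s => s * φ s) (Set.Ioi 0))
    (hmval : ∫ s in Set.Ioi (0:ℝ), s * φ s = m)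
    -- the characteristic function φ̂(z) = ∫_0^∞ e^{izs} φ(s) ds
    (φhat : ℝ → ℂ)
    (hφhat : ∀ z : ℝ,
      φhat z = ∫ s in Set.Ioi (0:ℝ), Complex.exp (Complex.I * z * s) * (φ s : ℂ))
    (c : ℝ → ℝ)
    (lam : ℝ) (hlam : 0 < lam)
    (hclim : Tendsto (fun T => T * (1 - c T)) atTop (𝓝 lam)) :
    ∀ z : ℝ,
      Tendsto
        (fun T => ((1 - c T : ℝ) : ℂ) * φhat (z / T) / (1 - (c T : ℂ) * φhat (z / T)))
        atTop
        (𝓝 (1 / (1 - Complex.I * ((m / lam : ℝ) : ℂ) * (z : ℂ)))) := by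
  intro z
  have hφhat0 : φhat 0 = 1 := by
    rw [hφhat, ← Complex.ofReal_one, ← hφ1, ← integral_complex_ofReal]
    simp
  have hderiv : HasDerivAt φhat (Complex.I * m) 0 := by
    convert hasDerivAt_integral_cexp_mul hφint.ofReal
      ((hmint.ofReal (𝕜 := ℂ)).congr (.of_forall fun s => Complex.ofReal_mul s (φ s))) 0 using 1
    · exact funext hφhat
    · simp only [Complex.ofReal_zero, mul_zero, zero_mul, Complex.exp_zero, mul_one, mul_assoc]
      rw [integral_const_mul, ← hmval, ← integral_complex_ofReal]
      push_cast
      rfl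
  have hp := hderiv.tendsto_smul_sub_div_atTop z
  simp only [hφhat0, Complex.real_smul] at hp
  have hc : Tendsto (fun T : ℝ => (T : ℂ) * (1 - c T)) atTop (𝓝 lam) := by
    simpa using hclim.ofReal
  have hlw : (lam : ℂ) - z * (Complex.I * m) ≠ 0 := by
    intro h
    simpa [hlam.ne'] using congrArg Complex.re h
  convert tendsto_one_sub_mul_div_one_sub_mul_atTop hc hp hlw using 2
  · push_cast
    rfl
  · have hlam' : (lam : ℂ) ≠ 0 := Complex.ofReal_ne_zero.mpr hlam.ne'
    rw [show (lam : ℂ) - z * (Complex.I * m) = lam * (1 - Complex.I * ((m / lam : ℝ) : ℂ) * z) by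
      push_cast; field_simp, div_mul_cancel_left₀ hlam', one_div]

theorem stmt6
    (φ : ℝ → ℝ) (hφmeas : Measurable φ) (hφnonneg : ∀ s, 0 ≤ φ s)
    (hφneg : ∀ s < (0:ℝ), φ s = 0)
    (hφint : IntegrableOn φ (Set.Ioi 0))
    (hφ1 : ∫ s in Set.Ioi (0:ℝ), φ s = 1)
    (m : ℝ) (hm : 0 < m)
    (hmint : IntegrableOn (fun s => s * φ s) (Set.Ioi 0))
    (hmval : ∫ s in Set.Ioi (0:ℝ), s * φ s = m)
    -- the characteristic function φ̂(z) = ∫_0^∞ e^{izs} φ(s) ds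
    (φhat : ℝ → ℂ)
    (hφhat : ∀ z : ℝ,
      φhat z = ∫ s in Set.Ioi (0:ℝ), Complex.exp (Complex.I * z * s) * (φ s : ℂ))
    (c : ℝ → ℝ) (hc : ∀ T > 0, 0 < c T ∧ c T < 1)
    (lam : ℝ) (hlam : 0 < lam)
    (hclim : Tendsto (fun T => T * (1 - c T)) atTop (𝓝 lam)) :
    ∀ z : ℝ,
      Tendsto
        (fun T => ((1 - c T : ℝ) : ℂ) * φhat (z / T) / (1 - (c T : ℂ) * φhat (z / T)))
        atTop
        (𝓝 (1 / (1 - Complex.I * ((m / lam : ℝ) : ℂ) * (z : ℂ)))) :=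
  stmt6_general φ hφint hφ1 m hmint hmval φhat hφhat c lam hlam hclim
end

section
/- Let φ : [0,∞) → [0,∞) be a measurable probability density with ∫_0^∞ φ(s) ds = 1 and finite positive mean m = ∫_0^∞ s φ(s) ds ∈ (0,∞). Let (a_T)_{T>0} satisfy a_T > 1 for all T and lim_{T→∞} a_T = 1, and for each T let b_T > 0 satisfy ∫_0^∞ e^{−b_T s} a_T φ(s) ds = 1/a_T. Then lim_{T→∞} b_T = 0 and lim_{T→∞} (a_T − 1/a_T)/b_T = m. -/
open MeasureTheory Filter Topology Set Real

/-!
Write `L(β) = ∫_{s>0} e^{-βs} φ(s) ds` for the Laplace transform of `φ`. The defining equation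
of `b_T` says `L(b_T) = 1 / a_T²`, which tends to `1 = L(0)`. Since `L` is antitone and
`L(ε) < 1` for every `ε > 0`, this forces `b_T → 0⁺`. Then
`(a_T - 1/a_T) / b_T = a_T (1 - L(b_T)) / b_T = a_T ∫ (1 - e^{-b_T s}) / b_T · φ(s) ds`,
and by dominated convergence (with `(1 - e^{-βs}) / β ≤ s`) the integral tends to the mean `m`.
-/

noncomputable def laplaceIoi (φ : ℝ → ℝ) (β : ℝ) : ℝ :=
  ∫ s in Ioi 0, exp (-β * s) * φ s

lemma exp_neg_mul_le_one {β s : ℝ} (hβ : 0 ≤ β) (hs : 0 ≤ s) : exp (-β * s) ≤ 1 :=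
  exp_le_one_iff.2 (by nlinarith)

lemma one_sub_exp_neg_mul_div_le {β s : ℝ} (hβ : 0 < β) : (1 - exp (-β * s)) / β ≤ s := by
  rw [div_le_iff₀ hβ]
  linarith [add_one_le_exp (-β * s)]

lemma tendsto_one_sub_exp_neg_mul_div (s : ℝ) :
    Tendsto (fun β => (1 - exp (-β * s)) / β) (𝓝[≠] 0) (𝓝 s) := by
  have hderiv : HasDerivAt (fun β => 1 - exp (-β * s)) s 0 := by
    simpa using (((hasDerivAt_id (0 : ℝ)).neg.mul_const s).exp).const_sub 1
  refine (hasDerivAt_iff_tendsto_slope.1 hderiv).congr fun β => ?_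
  simp [slope_def_field]

section Laplace

variable {φ : ℝ → ℝ}

lemma integrableOn_exp_neg_mul (hφ : IntegrableOn φ (Ioi 0)) {β : ℝ} (hβ : 0 ≤ β) :
    IntegrableOn (fun s => exp (-β * s) * φ s) (Ioi 0) := by
  have hexp : Continuous fun s => exp (-β * s) := by fun_prop
  refine hφ.bdd_mul (c := 1) hexp.aestronglyMeasurable ?_
  filter_upwards [ae_restrict_mem measurableSet_Ioi] with s hs
  rw [norm_of_nonneg (exp_pos _).le]
  exact exp_neg_mul_le_one hβ (le_of_lt hs)

lemma integrableOn_one_sub_exp_neg_mul (hφ : IntegrableOn φ (Ioi 0)) {β : ℝ} (hβ : 0 ≤ β) :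
    IntegrableOn (fun s => (1 - exp (-β * s)) * φ s) (Ioi 0) :=
  (hφ.sub (integrableOn_exp_neg_mul hφ hβ)).congr_fun
    (fun s _ => by simp only [Pi.sub_apply]; ring) measurableSet_Ioi

lemma integral_one_sub_exp_neg_mul (hφ : IntegrableOn φ (Ioi 0)) {β : ℝ} (hβ : 0 ≤ β) :
    ∫ s in Ioi 0, (1 - exp (-β * s)) * φ s = (∫ s in Ioi 0, φ s) - laplaceIoi φ β := by
  rw [laplaceIoi, ← integral_sub hφ (integrableOn_exp_neg_mul hφ hβ)]
  congr 1 with s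
  ring

lemma laplaceIoi_antitoneOn (hφ0 : ∀ s, 0 ≤ φ s) (hφ : IntegrableOn φ (Ioi 0)) :
    AntitoneOn (laplaceIoi φ) (Ici 0) := fun β hβ γ _ hβγ =>
  setIntegral_mono_on (integrableOn_exp_neg_mul hφ (hβ.trans hβγ))
    (integrableOn_exp_neg_mul hφ hβ) measurableSet_Ioi fun s hs =>
      mul_le_mul_of_nonneg_right (exp_le_exp.2 (by nlinarith [mem_Ioi.1 hs])) (hφ0 s)

lemma laplaceIoi_lt_integral (hφ0 : ∀ s, 0 ≤ φ s) (hφ : IntegrableOn φ (Ioi 0))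
    (hpos : 0 < ∫ s in Ioi 0, φ s) {β : ℝ} (hβ : 0 < β) :
    laplaceIoi φ β < ∫ s in Ioi 0, φ s := by
  have hnonneg : 0 ≤ᵐ[volume.restrict (Ioi 0)] fun s => (1 - exp (-β * s)) * φ s :=
    ae_restrict_of_forall_mem measurableSet_Ioi fun s hs =>
      mul_nonneg (sub_nonneg.2 (exp_neg_mul_le_one hβ.le (le_of_lt hs))) (hφ0 s)
  rw [← sub_pos, ← integral_one_sub_exp_neg_mul hφ hβ.le,
    setIntegral_pos_iff_support_of_nonneg_ae hnonneg (integrableOn_one_sub_exp_neg_mul hφ hβ.le)]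
  rw [setIntegral_pos_iff_support_of_nonneg_ae
    (ae_restrict_of_forall_mem measurableSet_Ioi fun s _ => hφ0 s) hφ] at hpos
  -- `1 - e^{-βs}` vanishes nowhere on `(0, ∞)`, so both integrands have the same support there.
  convert hpos using 2
  ext s
  simp only [mem_inter_iff, Function.mem_support, mem_Ioi, mul_ne_zero_iff, sub_ne_zero]
  constructor
  · exact fun ⟨⟨_, h⟩, hs⟩ => ⟨h, hs⟩
  · exact fun ⟨h, hs⟩ => ⟨⟨(exp_lt_one_iff.2 (by nlinarith)).ne', h⟩, hs⟩

lemma tendsto_integral_sub_laplaceIoi_div (hφ0 : ∀ s, 0 ≤ φ s) (hφ : IntegrableOn φ (Ioi 0))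
    (hsφ : IntegrableOn (fun s => s * φ s) (Ioi 0)) :
    Tendsto (fun β => ((∫ s in Ioi 0, φ s) - laplaceIoi φ β) / β) (𝓝[>] 0)
      (𝓝 (∫ s in Ioi 0, s * φ s)) := by
  have hquot : ∀ᶠ β in 𝓝[>] (0 : ℝ),
      ∫ s in Ioi 0, (1 - exp (-β * s)) / β * φ s =
        ((∫ s in Ioi 0, φ s) - laplaceIoi φ β) / β := by
    filter_upwards [self_mem_nhdsWithin] with β (hβ : 0 < β)
    simp_rw [div_mul_eq_mul_div, integral_div, integral_one_sub_exp_neg_mul hφ hβ.le]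
  refine (tendsto_integral_filter_of_dominated_convergence _ ?_ ?_ hsφ ?_).congr' hquot
  · exact Eventually.of_forall fun β =>
      ((by fun_prop : Continuous fun s => (1 - exp (-β * s)) / β).aestronglyMeasurable).mul
        hφ.aestronglyMeasurable
  · filter_upwards [self_mem_nhdsWithin] with β (hβ : 0 < β)
    filter_upwards [ae_restrict_mem measurableSet_Ioi] with s hs
    have hquot_nonneg : 0 ≤ (1 - exp (-β * s)) / β :=
      div_nonneg (sub_nonneg.2 (exp_neg_mul_le_one hβ.le (le_of_lt hs))) hβ.le
    rw [norm_mul, norm_of_nonneg hquot_nonneg, norm_of_nonneg (hφ0 s)]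
    exact mul_le_mul_of_nonneg_right (one_sub_exp_neg_mul_div_le hβ) (hφ0 s)
  · exact Eventually.of_forall fun s =>
      ((tendsto_one_sub_exp_neg_mul_div s).mono_left
        (nhdsWithin_mono _ fun _ h => ne_of_gt h)).mul_const (φ s)

lemma tendsto_nhdsGT_zero_of_tendsto_laplaceIoi {ι : Type*} {l : Filter ι} {b : ι → ℝ}
    (hφ0 : ∀ s, 0 ≤ φ s) (hφ : IntegrableOn φ (Ioi 0)) (hpos : 0 < ∫ s in Ioi 0, φ s)
    (hb : ∀ᶠ i in l, 0 < b i)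
    (hL : Tendsto (fun i => laplaceIoi φ (b i)) l (𝓝 (∫ s in Ioi 0, φ s))) :
    Tendsto b l (𝓝[>] 0) := by
  refine tendsto_nhdsWithin_iff.2 ⟨tendsto_order.2 ⟨fun c hc => hb.mono fun i hi => hc.trans hi,
    fun ε hε => ?_⟩, hb⟩
  have hLε := hL.eventually (eventually_gt_nhds (laplaceIoi_lt_integral hφ0 hφ hpos hε))
  filter_upwards [hb, hLε] with i hbi hLi
  by_contra! hεb
  exact hLi.not_ge (laplaceIoi_antitoneOn hφ0 hφ hε.le hbi.le hεb)

end Laplace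

theorem stmt8_general
    (φ : ℝ → ℝ) (hφnonneg : ∀ s, 0 ≤ φ s)
    (hφint : IntegrableOn φ (Set.Ioi 0))
    (hφ1 : ∫ s in Set.Ioi (0:ℝ), φ s = 1)
    (m : ℝ)
    (hmint : IntegrableOn (fun s => s * φ s) (Set.Ioi 0))
    (hmval : ∫ s in Set.Ioi (0:ℝ), s * φ s = m)
    (a : ℝ → ℝ)
    (halim : Tendsto a atTop (𝓝 1))
    (b : ℝ → ℝ) (hb : ∀ T > 0, 0 < b T)
    (hbeq : ∀ T > 0,
      ∫ s in Set.Ioi (0:ℝ), Real.exp (-(b T) * s) * (a T * φ s) = 1 / a T) :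
    Tendsto b atTop (𝓝 0) ∧
      Tendsto (fun T => (a T - 1 / a T) / b T) atTop (𝓝 m) := by
  have ha0 : ∀ᶠ T in atTop, a T ≠ 0 := halim.eventually_ne one_ne_zero
  have hL : ∀ᶠ T in atTop, laplaceIoi φ (b T) = (a T ^ 2)⁻¹ := by
    filter_upwards [eventually_gt_atTop 0, ha0] with T hT haT
    have h := hbeq T hT
    simp_rw [mul_left_comm _ (a T), integral_const_mul] at h
    rw [laplaceIoi]
    field_simp at h ⊢
    linear_combination h
  have hLlim : Tendsto (fun T => laplaceIoi φ (b T)) atTop (𝓝 (∫ s in Ioi 0, φ s)) := by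
    simpa [hφ1] using ((halim.pow 2).inv₀ (by norm_num)).congr' (hL.mono fun _ h => h.symm)
  have hb0 : Tendsto b atTop (𝓝[>] 0) :=
    tendsto_nhdsGT_zero_of_tendsto_laplaceIoi hφnonneg hφint (hφ1 ▸ one_pos)
      ((eventually_gt_atTop 0).mono hb) hLlim
  refine ⟨tendsto_nhdsWithin_iff.1 hb0 |>.1, ?_⟩
  have hlim := halim.mul ((tendsto_integral_sub_laplaceIoi_div hφnonneg hφint hmint).comp hb0)
  rw [one_mul, hmval, hφ1] at hlim
  refine hlim.congr' ?_
  filter_upwards [hL, ha0] with T hLT haT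
  simp only [Function.comp_apply, hLT]
  field_simp

theorem stmt8
    (φ : ℝ → ℝ) (hφmeas : Measurable φ) (hφnonneg : ∀ s, 0 ≤ φ s)
    (hφneg : ∀ s < (0:ℝ), φ s = 0)
    (hφint : IntegrableOn φ (Set.Ioi 0))
    (hφ1 : ∫ s in Set.Ioi (0:ℝ), φ s = 1)
    (m : ℝ) (hm : 0 < m)
    (hmint : IntegrableOn (fun s => s * φ s) (Set.Ioi 0))
    (hmval : ∫ s in Set.Ioi (0:ℝ), s * φ s = m)
    (a : ℝ → ℝ) (ha : ∀ T > 0, 1 < a T)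
    (halim : Tendsto a atTop (𝓝 1))
    (b : ℝ → ℝ) (hb : ∀ T > 0, 0 < b T)
    (hbeq : ∀ T > 0,
      ∫ s in Set.Ioi (0:ℝ), Real.exp (-(b T) * s) * (a T * φ s) = 1 / a T) :
    Tendsto b atTop (𝓝 0) ∧
      Tendsto (fun T => (a T - 1 / a T) / b T) atTop (𝓝 m) :=
  stmt8_general φ hφnonneg hφint hφ1 m hmint hmval a halim b hb hbeq
end

section
/- Let A ∈ ℝ, let f, g : [0,∞) → ℝ be locally bounded measurable functions, and let φ : [0,∞) → [0,∞) be locally integrable. If f_t = g_t + A ∫_0^t φ(t−s) f_s ds for all t ≥ 0, then for all t ≥ 0 the series ∑_{n≥1} |A|^n ∫_0^t φ^{*n}(t−s) |g_s| ds converges and f_t = g_t + ∑_{n≥1} A^n ∫_0^t φ^{*n}(t−s) g_s ds. -/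
/-!
Write `a ⋆ b` for the Volterra convolution `t ↦ ∫₀ᵗ a(t - s) b(s) ds`, so that
`φ^{*(n+1)} = φ ⋆ φ^{*n}`.
Fubini on the triangle `0 < u ≤ s ≤ t` gives `a ⋆ (b ⋆ h) = (b ⋆ a) ⋆ h`, and iterating
`f = g + A φ ⋆ f` yields
`f t = g t + ∑_{n=1}^{N} Aⁿ (φ^{*n} ⋆ g)(t) + A^{N+1} (φ^{*(N+1)} ⋆ f)(t)`.
The truncated Laplace mass `M_ρ(a) = ∫₀ᵗ e^{-ρs} |a(s)| ds` is submultiplicative for `⋆`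
(since `e^{-ρs} = e^{-ρ(s-u)} e^{-ρu}`) and tends to `0` as `ρ → ∞` by dominated convergence.
Hence `|(φ^{*n} ⋆ h)(t)| ≤ sup |h| · e^{ρt} M_ρ(φ)ⁿ`, and for `ρ` with `|A| M_ρ(φ) < 1` the
terms of both series, as well as the remainder, are dominated by a convergent geometric series.
-/

open MeasureTheory Filter Topology

open Set
open scoped ENNReal

def triangle (T : ℝ) : Set (ℝ × ℝ) := {p | 0 < p.2 ∧ p.2 ≤ p.1 ∧ p.1 ≤ T}

lemma measurableSet_triangle (T : ℝ) : MeasurableSet (triangle T) :=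
  (measurableSet_lt measurable_const measurable_snd).inter
    ((measurableSet_le measurable_snd measurable_fst).inter
      (measurableSet_le measurable_fst measurable_const))

lemma indicator_triangle_left {M : Type*} [Zero M] (F : ℝ × ℝ → M) (T s u : ℝ) :
    (triangle T).indicator F (s, u)
      = (Ioc 0 T).indicator (fun s => (Ioc 0 s).indicator (fun u => F (s, u)) u) s := by
  by_cases hs : s ∈ Ioc 0 T <;> by_cases hu : u ∈ Ioc 0 s <;>
    simp only [indicator, triangle, hs, hu, if_true, if_false] <;>
    grind

lemma indicator_triangle_right {M : Type*} [Zero M] (F : ℝ × ℝ → M) (T s u : ℝ) :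
    (triangle T).indicator F (s, u)
      = (Ioc 0 T).indicator (fun u => (Icc u T).indicator (fun s => F (s, u)) s) u := by
  by_cases hu : u ∈ Ioc 0 T <;> by_cases hs : s ∈ Icc u T <;>
    simp only [indicator, triangle, hs, hu, if_true, if_false] <;>
    grind

lemma setLIntegral_triangle_left {F : ℝ × ℝ → ℝ≥0∞} (hF : Measurable F) (T : ℝ) :
    ∫⁻ p in triangle T, F p = ∫⁻ s in Ioc 0 T, ∫⁻ u in Ioc 0 s, F (s, u) := by
  rw [← lintegral_indicator (measurableSet_triangle T), Measure.volume_eq_prod,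
    lintegral_prod _ (hF.indicator (measurableSet_triangle T)).aemeasurable,
    ← lintegral_indicator measurableSet_Ioc]
  simp_rw [indicator_triangle_left, ← lintegral_indicator measurableSet_Ioc]
  congr 1 with s
  by_cases hs : s ∈ Ioc 0 T <;> simp [hs]

lemma setLIntegral_triangle_right {F : ℝ × ℝ → ℝ≥0∞} (hF : Measurable F) (T : ℝ) :
    ∫⁻ p in triangle T, F p = ∫⁻ u in Ioc 0 T, ∫⁻ s in Icc u T, F (s, u) := by
  rw [← lintegral_indicator (measurableSet_triangle T), Measure.volume_eq_prod,
    lintegral_prod_symm _ (hF.indicator (measurableSet_triangle T)).aemeasurable,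
    ← lintegral_indicator measurableSet_Ioc]
  simp_rw [indicator_triangle_right, ← lintegral_indicator measurableSet_Icc]
  congr 1 with u
  by_cases hu : u ∈ Ioc 0 T <;> simp [hu]

lemma setIntegral_triangle_left {E : Type*} [NormedAddCommGroup E] [NormedSpace ℝ E]
    {F : ℝ × ℝ → E} {T : ℝ} (hF : IntegrableOn F (triangle T)) :
    ∫ p in triangle T, F p = ∫ s in Ioc 0 T, ∫ u in Ioc 0 s, F (s, u) := by
  rw [← integral_indicator (measurableSet_triangle T), Measure.volume_eq_prod,
    integral_prod _ ((integrable_indicator_iff (measurableSet_triangle T)).2 hF),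
    ← integral_indicator measurableSet_Ioc]
  simp_rw [indicator_triangle_left, ← integral_indicator measurableSet_Ioc]
  congr 1 with s
  by_cases hs : s ∈ Ioc 0 T <;> simp [hs]

lemma setIntegral_triangle_right {E : Type*} [NormedAddCommGroup E] [NormedSpace ℝ E]
    {F : ℝ × ℝ → E} {T : ℝ} (hF : IntegrableOn F (triangle T)) :
    ∫ p in triangle T, F p = ∫ u in Ioc 0 T, ∫ s in Icc u T, F (s, u) := by
  rw [← integral_indicator (measurableSet_triangle T), Measure.volume_eq_prod,
    integral_prod_symm _ ((integrable_indicator_iff (measurableSet_triangle T)).2 hF),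
    ← integral_indicator measurableSet_Ioc]
  simp_rw [indicator_triangle_right, ← integral_indicator measurableSet_Icc]
  congr 1 with u
  by_cases hu : u ∈ Ioc 0 T <;> simp [hu]

lemma setLIntegral_Ioc_comp_sub_left (G : ℝ → ℝ≥0∞) (t : ℝ) :
    ∫⁻ s in Ioc 0 t, G (t - s) = ∫⁻ s in Ioc 0 t, G s := by
  have h := (Measure.measurePreserving_sub_left volume t).setLIntegral_comp_preimage_emb
    (Homeomorph.subLeft t).measurableEmbedding G (Ico 0 t)
  rw [preimage_const_sub_Ico, sub_self, sub_zero] at h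
  rw [h, setLIntegral_congr Ico_ae_eq_Ioc]

lemma setLIntegral_Icc_comp_sub_right (G : ℝ → ℝ≥0∞) (u T : ℝ) :
    ∫⁻ s in Icc u T, G (s - u) = ∫⁻ v in Icc 0 (T - u), G v := by
  have h := (measurePreserving_sub_right volume u).setLIntegral_comp_preimage_emb
    (Homeomorph.subRight u).measurableEmbedding G (Icc 0 (T - u))
  rwa [preimage_sub_const_Icc, zero_add, sub_add_cancel] at h

noncomputable def volterraConv (a b : ℝ → ℝ) (t : ℝ) : ℝ :=
  ∫ s in (0:ℝ)..t, a (t - s) * b s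

lemma convPow_succ (φ : ℝ → ℝ) (n : ℕ) :
    convPow φ (n + 1) = volterraConv φ (convPow φ n) := rfl

lemma volterraConv_eq_setIntegral (a b : ℝ → ℝ) {t : ℝ} (ht : 0 ≤ t) :
    volterraConv a b t = ∫ s in Ioc 0 t, a (t - s) * b s :=
  intervalIntegral.integral_of_le ht

lemma measurable_volterraConv {a b : ℝ → ℝ} (ha : Measurable a) (hb : Measurable b) :
    Measurable (volterraConv a b) := by
  have hS : MeasurableSet {p : ℝ × ℝ | p.2 ∈ uIoc 0 p.1} :=
    (measurableSet_lt (measurable_const.min measurable_fst) measurable_snd).inter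
      (measurableSet_le measurable_snd (measurable_const.max measurable_fst))
  have hF : Measurable fun p : ℝ × ℝ =>
      (uIoc 0 p.1).indicator (fun s => a (p.1 - s) * b s) p.2 :=
    ((ha.comp (measurable_fst.sub measurable_snd)).mul (hb.comp measurable_snd)).indicator hS
  have hsign : Measurable fun t : ℝ => if 0 ≤ t then (1 : ℝ) else -1 :=
    Measurable.ite measurableSet_Ici measurable_const measurable_const
  have h : volterraConv a b = fun t => (if 0 ≤ t then (1 : ℝ) else -1) *
      ∫ s, (uIoc 0 t).indicator (fun s => a (t - s) * b s) s := by
    funext t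
    rw [volterraConv, intervalIntegral.intervalIntegral_eq_integral_uIoc, smul_eq_mul,
      integral_indicator measurableSet_uIoc]
  rw [h]
  exact hsign.mul hF.stronglyMeasurable.integral_prod_right'.measurable

noncomputable def laplaceMass (a : ℝ → ℝ) (ρ T : ℝ) : ℝ≥0∞ :=
  ∫⁻ s in Ioc 0 T, ‖Real.exp (-ρ * s) * a s‖ₑ

lemma laplaceMass_volterraConv_le {a b : ℝ → ℝ} (ha : Measurable a) (hb : Measurable b)
    (ρ T : ℝ) :
    laplaceMass (volterraConv a b) ρ T ≤ laplaceMass a ρ T * laplaceMass b ρ T := by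
  set G : ℝ → ℝ≥0∞ := fun v => ‖Real.exp (-ρ * v) * a v‖ₑ
  set H : ℝ → ℝ≥0∞ := fun u => ‖Real.exp (-ρ * u) * b u‖ₑ
  have hG : Measurable G := by fun_prop
  have hH : Measurable H := by fun_prop
  have hGH : Measurable fun p : ℝ × ℝ => G (p.1 - p.2) * H p.2 := by fun_prop
  have pointwise : ∀ s ∈ Ioc 0 T, ‖Real.exp (-ρ * s) * volterraConv a b s‖ₑ
      ≤ ∫⁻ u in Ioc 0 s, G (s - u) * H u := by
    intro s hs
    rw [volterraConv_eq_setIntegral a b hs.1.le, ← integral_const_mul]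
    refine (enorm_integral_le_lintegral_enorm _).trans_eq
      (setLIntegral_congr_fun measurableSet_Ioc fun u _ => ?_)
    rw [← enorm_mul, show -ρ * s = -ρ * (s - u) + -ρ * u by ring, Real.exp_add]
    ring_nf
  have inner : ∀ u ∈ Ioc 0 T, ∫⁻ s in Icc u T, G (s - u) ≤ laplaceMass a ρ T := by
    intro u hu
    rw [setLIntegral_Icc_comp_sub_right, laplaceMass, setLIntegral_congr Ioc_ae_eq_Icc]
    exact lintegral_mono_set (Icc_subset_Icc_right (by linarith [hu.1]))
  calc laplaceMass (volterraConv a b) ρ T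
      ≤ ∫⁻ s in Ioc 0 T, ∫⁻ u in Ioc 0 s, G (s - u) * H u :=
        setLIntegral_mono' measurableSet_Ioc pointwise
    _ = ∫⁻ u in Ioc 0 T, (∫⁻ s in Icc u T, G (s - u)) * H u := by
        rw [← setLIntegral_triangle_left hGH, setLIntegral_triangle_right hGH]
        refine setLIntegral_congr_fun measurableSet_Ioc fun u _ => ?_
        exact lintegral_mul_const (H u) (by fun_prop)
    _ ≤ ∫⁻ u in Ioc 0 T, laplaceMass a ρ T * H u :=
        setLIntegral_mono' measurableSet_Ioc fun u hu => by gcongr; exact inner u hu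
    _ = laplaceMass a ρ T * laplaceMass b ρ T := lintegral_const_mul _ hH

lemma measurable_convPow_s11 {φ : ℝ → ℝ} (hφ : Measurable φ) : ∀ n, Measurable (convPow φ n)
  | 0 => hφ
  | n + 1 => measurable_volterraConv hφ (measurable_convPow_s11 hφ n)

lemma laplaceMass_convPow_le {φ : ℝ → ℝ} (hφ : Measurable φ) (ρ T : ℝ) :
    ∀ n, laplaceMass (convPow φ n) ρ T ≤ laplaceMass φ ρ T ^ (n + 1)
  | 0 => by rw [zero_add, pow_one]; rfl
  | n + 1 => calc
      laplaceMass (convPow φ (n + 1)) ρ T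
          ≤ laplaceMass φ ρ T * laplaceMass (convPow φ n) ρ T :=
        laplaceMass_volterraConv_le hφ (measurable_convPow_s11 hφ n) ρ T
      _ ≤ laplaceMass φ ρ T * laplaceMass φ ρ T ^ (n + 1) := by
        gcongr; exact laplaceMass_convPow_le hφ ρ T n
      _ = laplaceMass φ ρ T ^ (n + 1 + 1) := (pow_succ' _ _).symm

lemma laplaceMass_zero (a : ℝ → ℝ) (T : ℝ) :
    laplaceMass a 0 T = ∫⁻ s in Ioc 0 T, ‖a s‖ₑ := by
  simp only [laplaceMass, neg_zero, zero_mul, Real.exp_zero, one_mul]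

lemma lintegral_enorm_le_laplaceMass (a : ℝ → ℝ) {ρ : ℝ} (hρ : 0 ≤ ρ) (T : ℝ) :
    ∫⁻ s in Ioc 0 T, ‖a s‖ₑ
      ≤ ENNReal.ofReal (Real.exp (ρ * T)) * laplaceMass a ρ T := by
  rw [laplaceMass, ← lintegral_const_mul' _ _ ENNReal.ofReal_ne_top]
  refine setLIntegral_mono' measurableSet_Ioc fun s hs => ?_
  rw [← Real.enorm_eq_ofReal (Real.exp_pos _).le, ← enorm_mul, ← mul_assoc, ← Real.exp_add,
    Real.enorm_eq_ofReal_abs, Real.enorm_eq_ofReal_abs, abs_mul, abs_of_pos (Real.exp_pos _)]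
  refine ENNReal.ofReal_le_ofReal (le_mul_of_one_le_left (abs_nonneg _) ?_)
  exact Real.one_le_exp (by nlinarith [hs.2])

lemma tendsto_laplaceMass_atTop {a : ℝ → ℝ} {T : ℝ} (ha : IntegrableOn a (Ioc 0 T)) :
    Tendsto (fun ρ => laplaceMass a ρ T) atTop (𝓝 0) := by
  have hlim : ∀ s ∈ Ioc (0:ℝ) T,
      Tendsto (fun ρ : ℝ => ‖Real.exp (-ρ * s) * a s‖ₑ) atTop (𝓝 0) := by
    intro s hs
    have hexp : Tendsto (fun ρ : ℝ => Real.exp (-ρ * s)) atTop (𝓝 0) :=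
      Real.tendsto_exp_atBot.comp
        (tendsto_neg_atTop_atBot.atBot_mul_const hs.1)
    have hprod : Tendsto (fun ρ : ℝ => Real.exp (-ρ * s) * a s) atTop (𝓝 0) := by
      simpa using hexp.mul_const (a s)
    have h := (continuous_enorm.tendsto (0:ℝ)).comp hprod
    rwa [enorm_zero] at h
  have h := tendsto_lintegral_filter_of_dominated_convergence'
    (F := fun ρ s => ‖Real.exp (-ρ * s) * a s‖ₑ) (f := fun _ => 0) (fun s => ‖a s‖ₑ)
    (Eventually.of_forall fun ρ =>
      ((by fun_prop : Continuous fun s => Real.exp (-ρ * s)).aestronglyMeasurable.mul ha.1).enorm)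
    ((eventually_ge_atTop 0).mono fun ρ hρ => (ae_restrict_iff' measurableSet_Ioc).2 <|
      ae_of_all _ fun s hs => by
        rw [enorm_mul, Real.enorm_eq_ofReal (Real.exp_pos _).le]
        exact mul_le_of_le_one_left' (ENNReal.ofReal_le_one.2
          (Real.exp_le_one_iff.2 (by nlinarith [hs.1]))))
    ha.2.ne ((ae_restrict_iff' measurableSet_Ioc).2 (ae_of_all _ hlim))
  rwa [lintegral_zero] at h

lemma exists_mul_laplaceMass_lt_one {a : ℝ → ℝ} {T : ℝ} (ha : IntegrableOn a (Ioc 0 T))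
    (c : ℝ) :
    ∃ ρ, 0 ≤ ρ ∧ laplaceMass a ρ T ≠ ⊤ ∧ c * (laplaceMass a ρ T).toReal < 1 := by
  have hL := tendsto_laplaceMass_atTop ha
  have hc : Tendsto (fun ρ => c * (laplaceMass a ρ T).toReal) atTop (𝓝 0) := by
    simpa using ((ENNReal.tendsto_toReal ENNReal.zero_ne_top).comp hL).const_mul c
  exact ((eventually_ge_atTop 0).and ((hL.eventually_ne ENNReal.zero_ne_top).and
    (hc.eventually_lt_const one_pos))).exists

lemma integrableOn_convPow {φ : ℝ → ℝ} (hφ : Measurable φ) {T : ℝ}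
    (hφT : IntegrableOn φ (Ioc 0 T)) (n : ℕ) : IntegrableOn (convPow φ n) (Ioc 0 T) := by
  refine ⟨(measurable_convPow_s11 hφ n).aestronglyMeasurable, ?_⟩
  have h := laplaceMass_convPow_le hφ 0 T n
  rw [laplaceMass_zero, laplaceMass_zero] at h
  exact h.trans_lt (ENNReal.pow_lt_top hφT.2)

lemma lintegral_enorm_volterra_integrand_le {a h : ℝ → ℝ} {t C : ℝ}
    (hC : ∀ s ∈ Ioc 0 t, |h s| ≤ C) :
    ∫⁻ s in Ioc 0 t, ‖a (t - s) * h s‖ₑ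
      ≤ ENNReal.ofReal C * ∫⁻ s in Ioc 0 t, ‖a s‖ₑ := by
  calc ∫⁻ s in Ioc 0 t, ‖a (t - s) * h s‖ₑ
      ≤ ∫⁻ s in Ioc 0 t, ENNReal.ofReal C * ‖a (t - s)‖ₑ :=
        setLIntegral_mono' measurableSet_Ioc fun s hs => by
          rw [enorm_mul, mul_comm, Real.enorm_eq_ofReal_abs (h s)]
          gcongr
          exact hC s hs
    _ = ENNReal.ofReal C * ∫⁻ s in Ioc 0 t, ‖a s‖ₑ := by
        rw [lintegral_const_mul' _ _ ENNReal.ofReal_ne_top,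
          setLIntegral_Ioc_comp_sub_left (fun s => ‖a s‖ₑ)]

lemma integrableOn_volterra_integrand {a h : ℝ → ℝ} {t C : ℝ} (ha : Measurable a)
    (hh : Measurable h) (ha' : IntegrableOn a (Ioc 0 t)) (hC : ∀ s ∈ Ioc 0 t, |h s| ≤ C) :
    IntegrableOn (fun s => a (t - s) * h s) (Ioc 0 t) :=
  ⟨(by fun_prop : Measurable fun s => a (t - s) * h s).aestronglyMeasurable,
    (lintegral_enorm_volterra_integrand_le hC).trans_lt
      (ENNReal.mul_lt_top ENNReal.ofReal_lt_top ha'.2)⟩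

lemma enorm_volterraConv_le {a h : ℝ → ℝ} {t C : ℝ} (ht : 0 ≤ t)
    (hC : ∀ s ∈ Ioc 0 t, |h s| ≤ C) :
    ‖volterraConv a h t‖ₑ ≤ ENNReal.ofReal C * ∫⁻ s in Ioc 0 t, ‖a s‖ₑ := by
  rw [volterraConv_eq_setIntegral a h ht]
  exact (enorm_integral_le_lintegral_enorm _).trans (lintegral_enorm_volterra_integrand_le hC)

lemma setIntegral_Icc_eq_volterraConv (a b : ℝ → ℝ) {u t : ℝ} (hut : u ≤ t) :
    ∫ s in Icc u t, a (t - s) * b (s - u) = volterraConv b a (t - u) := by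
  have h := intervalIntegral.integral_comp_sub_left (a := u) (b := t)
    (fun v => b (t - u - v) * a v) t
  simp only [sub_self, sub_sub_sub_cancel_left] at h
  rw [integral_Icc_eq_integral_Ioc, ← intervalIntegral.integral_of_le hut, volterraConv, ← h]
  simp only [mul_comm]

lemma volterraConv_assoc {a b h : ℝ → ℝ} {t C : ℝ} (ha : Measurable a) (hb : Measurable b)
    (hh : Measurable h) (ht : 0 ≤ t) (ha' : IntegrableOn a (Ioc 0 t))
    (hb' : IntegrableOn b (Ioc 0 t)) (hC : ∀ s ∈ Ioc 0 t, |h s| ≤ C) :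
    volterraConv a (volterraConv b h) t = volterraConv (volterraConv b a) h t := by
  set F : ℝ × ℝ → ℝ := fun p => a (t - p.1) * (b (p.1 - p.2) * h p.2)
  have hF : IntegrableOn F (triangle t) := by
    refine ⟨(by fun_prop : Measurable F).aestronglyMeasurable, ?_⟩
    calc ∫⁻ p in triangle t, ‖F p‖ₑ
        = ∫⁻ s in Ioc 0 t, ‖a (t - s)‖ₑ
            * ∫⁻ u in Ioc 0 s, ‖b (s - u) * h u‖ₑ := by
          rw [setLIntegral_triangle_left (by fun_prop)]
          refine setLIntegral_congr_fun measurableSet_Ioc fun s _ => ?_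
          simp only [F, enorm_mul]
          rw [← lintegral_const_mul' _ _ enorm_ne_top]
      _ ≤ ∫⁻ s in Ioc 0 t, ‖a (t - s)‖ₑ
            * (ENNReal.ofReal C * ∫⁻ u in Ioc 0 t, ‖b u‖ₑ) := by
          refine setLIntegral_mono' measurableSet_Ioc fun s hs => ?_
          grw [lintegral_enorm_volterra_integrand_le fun u hu => hC u ⟨hu.1, hu.2.trans hs.2⟩,
            Ioc_subset_Ioc_right hs.2]
      _ = (∫⁻ s in Ioc 0 t, ‖a s‖ₑ)
            * (ENNReal.ofReal C * ∫⁻ u in Ioc 0 t, ‖b u‖ₑ) := by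
          rw [lintegral_mul_const _ (by fun_prop),
            setLIntegral_Ioc_comp_sub_left (fun s => ‖a s‖ₑ)]
      _ < ⊤ := ENNReal.mul_lt_top ha'.2 (ENNReal.mul_lt_top ENNReal.ofReal_lt_top hb'.2)
  calc volterraConv a (volterraConv b h) t
      = ∫ s in Ioc 0 t, ∫ u in Ioc 0 s, F (s, u) := by
        rw [volterraConv_eq_setIntegral _ _ ht]
        refine setIntegral_congr_fun measurableSet_Ioc fun s hs => ?_
        rw [volterraConv_eq_setIntegral _ _ hs.1.le, ← integral_const_mul]
    _ = ∫ u in Ioc 0 t, ∫ s in Icc u t, F (s, u) := by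
        rw [← setIntegral_triangle_left hF, setIntegral_triangle_right hF]
    _ = volterraConv (volterraConv b a) h t := by
        rw [volterraConv_eq_setIntegral _ _ ht]
        refine setIntegral_congr_fun measurableSet_Ioc fun u hu => ?_
        simp only [F, ← mul_assoc]
        rw [integral_mul_const, setIntegral_Icc_eq_volterraConv a b hu.2]

lemma volterraConv_convPow_eq_add {φ f g : ℝ → ℝ} {A t Cf Cg : ℝ} (hφ : Measurable φ)
    (hf : Measurable f) (hg : Measurable g) (ht : 0 ≤ t) (hφt : IntegrableOn φ (Ioc 0 t))
    (hfC : ∀ s ∈ Ioc 0 t, |f s| ≤ Cf) (hgC : ∀ s ∈ Ioc 0 t, |g s| ≤ Cg)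
    (heq : ∀ s ∈ Ioc 0 t, f s = g s + A * volterraConv φ f s) (n : ℕ) :
    volterraConv (convPow φ n) f t
      = volterraConv (convPow φ n) g t + A * volterraConv (convPow φ (n + 1)) f t := by
  have hc := measurable_convPow_s11 hφ n
  have hct := integrableOn_convPow hφ hφt n
  have hdiff : ∫ s in Ioc 0 t, convPow φ n (t - s) * (A * volterraConv φ f s)
      = volterraConv (convPow φ n) f t - volterraConv (convPow φ n) g t := by
    rw [volterraConv_eq_setIntegral _ _ ht, volterraConv_eq_setIntegral _ _ ht,
      ← integral_sub (integrableOn_volterra_integrand hc hf hct hfC)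
        (integrableOn_volterra_integrand hc hg hct hgC)]
    refine setIntegral_congr_fun measurableSet_Ioc fun s hs => ?_
    simp only [heq s hs]
    ring
  have hassoc : ∫ s in Ioc 0 t, convPow φ n (t - s) * (A * volterraConv φ f s)
      = A * volterraConv (convPow φ (n + 1)) f t := by
    simp only [mul_left_comm _ A, integral_const_mul]
    rw [← volterraConv_eq_setIntegral _ _ ht, convPow_succ,
      volterraConv_assoc hc hφ hf ht hct hφt hfC]
  linarith

lemma eq_add_sum_volterraConv_convPow {φ f g : ℝ → ℝ} {A t Cf Cg : ℝ} (hφ : Measurable φ)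
    (hf : Measurable f) (hg : Measurable g) (ht : 0 ≤ t) (hφt : IntegrableOn φ (Ioc 0 t))
    (hfC : ∀ s ∈ Ioc 0 t, |f s| ≤ Cf) (hgC : ∀ s ∈ Ioc 0 t, |g s| ≤ Cg)
    (heq : ∀ s ∈ Icc 0 t, f s = g s + A * volterraConv φ f s) (N : ℕ) :
    f t = g t + ∑ n ∈ Finset.range N, A ^ (n + 1) * volterraConv (convPow φ n) g t
      + A ^ (N + 1) * volterraConv (convPow φ N) f t := by
  induction N with
  | zero =>
    rw [Finset.sum_range_zero, add_zero, zero_add, pow_one]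
    exact heq t ⟨ht, le_rfl⟩
  | succ N ih =>
    rw [ih, volterraConv_convPow_eq_add hφ hf hg ht hφt hfC hgC
      (fun s hs => heq s (Ioc_subset_Icc_self hs)) N, Finset.sum_range_succ]
    ring

lemma abs_pow_mul_volterraConv_convPow_le {φ h : ℝ → ℝ} (hφ : Measurable φ) (c : ℝ)
    {ρ t C : ℝ} (hρ : 0 ≤ ρ) (ht : 0 ≤ t) (hC0 : 0 ≤ C) (hC : ∀ s ∈ Ioc 0 t, |h s| ≤ C)
    (hM : laplaceMass φ ρ t ≠ ⊤) (n : ℕ) :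
    |c ^ (n + 1) * volterraConv (convPow φ n) h t|
      ≤ C * Real.exp (ρ * t) * (|c| * (laplaceMass φ ρ t).toReal) ^ (n + 1) := by
  have hE : ‖volterraConv (convPow φ n) h t‖ₑ
      ≤ ENNReal.ofReal C * (ENNReal.ofReal (Real.exp (ρ * t)) * laplaceMass φ ρ t ^ (n + 1)) :=
    calc ‖volterraConv (convPow φ n) h t‖ₑ
        ≤ ENNReal.ofReal C * ∫⁻ s in Ioc 0 t, ‖convPow φ n s‖ₑ :=
          enorm_volterraConv_le ht hC
      _ ≤ ENNReal.ofReal C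
            * (ENNReal.ofReal (Real.exp (ρ * t)) * laplaceMass (convPow φ n) ρ t) := by
        grw [lintegral_enorm_le_laplaceMass _ hρ t]
      _ ≤ _ := by grw [laplaceMass_convPow_le hφ ρ t n]
  have hR := ENNReal.toReal_mono (by finiteness) hE
  rw [toReal_enorm, ENNReal.toReal_mul, ENNReal.toReal_mul, ENNReal.toReal_pow,
    ENNReal.toReal_ofReal hC0, ENNReal.toReal_ofReal (Real.exp_pos _).le, Real.norm_eq_abs] at hR
  rw [abs_mul, abs_pow, mul_pow]
  calc |c| ^ (n + 1) * |volterraConv (convPow φ n) h t|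
      ≤ |c| ^ (n + 1) * (C * (Real.exp (ρ * t) * (laplaceMass φ ρ t).toReal ^ (n + 1))) := by
        gcongr
    _ = _ := by ring

lemma summable_pow_mul_volterraConv_convPow {φ h : ℝ → ℝ} {t C : ℝ} (hφ : Measurable φ)
    (hφt : IntegrableOn φ (Ioc 0 t)) (ht : 0 ≤ t) (hC : ∀ s ∈ Ioc 0 t, |h s| ≤ C)
    (c : ℝ) :
    Summable fun n => c ^ (n + 1) * volterraConv (convPow φ n) h t := by
  obtain ⟨ρ, hρ, hM, hq⟩ := exists_mul_laplaceMass_lt_one hφt |c|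
  have hq0 : 0 ≤ |c| * (laplaceMass φ ρ t).toReal := by positivity
  refine Summable.of_norm_bounded
    (((summable_nat_add_iff 1).2 (summable_geometric_of_lt_one hq0 hq)).mul_left
      (max C 0 * Real.exp (ρ * t))) fun n => ?_
  exact abs_pow_mul_volterraConv_convPow_le hφ c hρ ht (le_max_right C 0)
    (fun s hs => (hC s hs).trans (le_max_left C 0)) hM n

lemma hasSum_pow_mul_volterraConv_convPow {φ f g : ℝ → ℝ} {A t Cf Cg : ℝ}
    (hφ : Measurable φ) (hf : Measurable f) (hg : Measurable g) (ht : 0 ≤ t)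
    (hφt : IntegrableOn φ (Ioc 0 t))
    (hfC : ∀ s ∈ Ioc 0 t, |f s| ≤ Cf) (hgC : ∀ s ∈ Ioc 0 t, |g s| ≤ Cg)
    (heq : ∀ s ∈ Icc 0 t, f s = g s + A * volterraConv φ f s) :
    HasSum (fun n => A ^ (n + 1) * volterraConv (convPow φ n) g t) (f t - g t) := by
  refine (summable_pow_mul_volterraConv_convPow hφ hφt ht hgC A).hasSum_iff_tendsto_nat.2 ?_
  have hrem := (summable_pow_mul_volterraConv_convPow hφ hφt ht hfC A).tendsto_atTop_zero
  have h := (tendsto_const_nhds (x := f t - g t)).sub hrem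
  rw [sub_zero] at h
  refine h.congr fun N => ?_
  have := eq_add_sum_volterraConv_convPow hφ hf hg ht hφt hfC hgC heq N
  linarith

theorem stmt11_general
    (A : ℝ) (f g : ℝ → ℝ)
    (hfmeas : Measurable f) (hgmeas : Measurable g)
    (hfb : ∀ t ≥ (0:ℝ), ∃ C, ∀ s ∈ Set.Icc (0:ℝ) t, |f s| ≤ C)
    (hgb : ∀ t ≥ (0:ℝ), ∃ C, ∀ s ∈ Set.Icc (0:ℝ) t, |g s| ≤ C)
    (φ : ℝ → ℝ) (hφmeas : Measurable φ)
    (hφloc : ∀ t ≥ (0:ℝ), IntegrableOn φ (Set.Icc 0 t))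
    (heq : ∀ t ≥ (0:ℝ), f t = g t + A * ∫ s in (0:ℝ)..t, φ (t - s) * f s) :
    ∀ t ≥ (0:ℝ),
      Summable (fun n : ℕ => |A| ^ (n + 1) * ∫ s in (0:ℝ)..t, convPow φ n (t - s) * |g s|) ∧
      f t = g t + ∑' n : ℕ, A ^ (n + 1) * ∫ s in (0:ℝ)..t, convPow φ n (t - s) * g s := by
  intro t ht
  obtain ⟨Cf, hCf⟩ := hfb t ht
  obtain ⟨Cg, hCg⟩ := hgb t ht
  have hfC : ∀ s ∈ Ioc 0 t, |f s| ≤ Cf := fun s hs => hCf s (Ioc_subset_Icc_self hs)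
  have hgC : ∀ s ∈ Ioc 0 t, |g s| ≤ Cg := fun s hs => hCg s (Ioc_subset_Icc_self hs)
  have hφt : IntegrableOn φ (Ioc 0 t) := (hφloc t ht).mono_set Ioc_subset_Icc_self
  refine ⟨summable_pow_mul_volterraConv_convPow hφmeas hφt ht
    (fun s hs => (abs_abs (g s)).trans_le (hgC s hs)) |A|, eq_add_of_sub_eq' ?_⟩
  exact (hasSum_pow_mul_volterraConv_convPow hφmeas hfmeas hgmeas ht hφt hfC hgC
    fun s hs => heq s hs.1).tsum_eq.symm

theorem stmt11
    (A : ℝ) (f g : ℝ → ℝ)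
    (hfmeas : Measurable f) (hgmeas : Measurable g)
    (hfb : ∀ t ≥ (0:ℝ), ∃ C, ∀ s ∈ Set.Icc (0:ℝ) t, |f s| ≤ C)
    (hgb : ∀ t ≥ (0:ℝ), ∃ C, ∀ s ∈ Set.Icc (0:ℝ) t, |g s| ≤ C)
    (φ : ℝ → ℝ) (hφmeas : Measurable φ) (hφnonneg : ∀ s, 0 ≤ φ s)
    (hφloc : ∀ t ≥ (0:ℝ), IntegrableOn φ (Set.Icc 0 t))
    (heq : ∀ t ≥ (0:ℝ), f t = g t + A * ∫ s in (0:ℝ)..t, φ (t - s) * f s) :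
    ∀ t ≥ (0:ℝ),
      Summable (fun n : ℕ => |A| ^ (n + 1) * ∫ s in (0:ℝ)..t, convPow φ n (t - s) * |g s|) ∧
      f t = g t + ∑' n : ℕ, A ^ (n + 1) * ∫ s in (0:ℝ)..t, convPow φ n (t - s) * g s :=
  stmt11_general A f g hfmeas hgmeas hfb hgb φ hφmeas hφloc heq
end

section
/- Let A ∈ ℝ, let g : [0,∞) → ℝ be locally bounded measurable, and let φ : [0,∞) → [0,∞) be locally integrable. Then the equation f_t = g_t + A ∫_0^t φ(t−s) f_s ds (for all t ≥ 0) has at most one locally bounded measurable solution f : [0,∞) → ℝ; that is, if f and f̃ are two locally bounded measurable solutions then f_t = f̃_t for all t ≥ 0. -/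
/-!
The difference `u = f - f'` solves the homogeneous equation
`u t = A * ∫ s in 0..t, φ (t - s) * u s`. As `φ` is integrable near `0`, there is `δ > 0` with
`|A| * ∫ s in 0..δ, φ s < 1`. If `u` vanishes on `[0, a]`, the equation at `t ∈ [a, a + δ]` only
involves `u` on `[a, t]`, so every bound `D` for `|u|` on `[a, a + δ]` improves to
`(|A| * ∫ s in 0..δ, φ s) * D`; hence `u = 0` on `[a, a + δ]`, and stepping by `δ` exhausts `[0, ∞)`.
-/

open MeasureTheory Filter Topology

open Set

def LocallyBoundedOnNonneg (f : ℝ → ℝ) : Prop :=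
  ∀ t ≥ (0:ℝ), ∃ C, ∀ s ∈ Icc (0:ℝ) t, |f s| ≤ C

theorem LocallyBoundedOnNonneg.sub {f f' : ℝ → ℝ} (hf : LocallyBoundedOnNonneg f)
    (hf' : LocallyBoundedOnNonneg f') : LocallyBoundedOnNonneg (f - f') := by
  intro t ht
  obtain ⟨C, hC⟩ := hf t ht
  obtain ⟨C', hC'⟩ := hf' t ht
  exact ⟨C + C', fun s hs => (abs_sub _ _).trans (add_le_add (hC s hs) (hC' s hs))⟩

theorem norm_eq_zero_of_forall_norm_le_mul {α E : Type*} [SeminormedAddCommGroup E]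
    {S : Set α} {u : α → E} {C c : ℝ} (hc₀ : 0 ≤ c) (hc₁ : c < 1)
    (hC : ∀ s ∈ S, ‖u s‖ ≤ C)
    (hcontr : ∀ D, (∀ s ∈ S, ‖u s‖ ≤ D) → ∀ s ∈ S, ‖u s‖ ≤ c * D) :
    ∀ s ∈ S, ‖u s‖ = 0 := by
  have hpow : ∀ n : ℕ, ∀ s ∈ S, ‖u s‖ ≤ c ^ n * C := by
    intro n
    induction n with
    | zero => simpa using hC
    | succ n ih => simpa [pow_succ, mul_assoc, mul_left_comm c] using hcontr _ ih
  have hlim : Tendsto (fun n : ℕ => c ^ n * C) atTop (𝓝 0) := by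
    simpa using (tendsto_pow_atTop_nhds_zero_of_lt_one hc₀ hc₁).mul_const C
  exact fun s hs => le_antisymm (ge_of_tendsto' hlim (hpow · s hs)) (norm_nonneg _)

section Volterra

variable {φ u : ℝ → ℝ}

theorem intervalIntegrable_comp_sub_mul {t C : ℝ} (ht : 0 ≤ t) (hφ : IntegrableOn φ (Icc 0 t))
    (hu : AEStronglyMeasurable u) (hC : ∀ s ∈ Icc 0 t, |u s| ≤ C) :
    IntervalIntegrable (fun s => φ (t - s) * u s) volume 0 t := by
  have hφt : IntervalIntegrable (fun s => φ (t - s)) volume 0 t := by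
    have := ((intervalIntegrable_iff_integrableOn_Icc_of_le ht).2 hφ).comp_sub_left t
    simpa only [sub_zero, sub_self] using this.symm
  rw [intervalIntegrable_iff_integrableOn_Icc_of_le ht] at hφt ⊢
  refine hφt.mul_bdd (c := C) hu.restrict ?_
  filter_upwards [ae_restrict_mem measurableSet_Icc] with s hs
  exact hC s hs

theorem abs_integral_comp_sub_mul_le {a t D : ℝ} (hφ₀ : ∀ s, 0 ≤ φ s) (ha : 0 ≤ a) (hat : a ≤ t)
    (hint : IntervalIntegrable (fun s => φ (t - s) * u s) volume 0 t)
    (hφt : IntervalIntegrable φ volume 0 (t - a))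
    (hzero : ∀ s ∈ Icc 0 a, u s = 0) (hD : ∀ s ∈ Icc a t, |u s| ≤ D) :
    |∫ s in 0..t, φ (t - s) * u s| ≤ D * ∫ s in 0..(t - a), φ s := by
  have ha_mem : a ∈ uIcc 0 t := by
    rw [uIcc_of_le (ha.trans hat)]
    exact ⟨ha, hat⟩
  have hI₁ := hint.mono_set (uIcc_subset_uIcc_left ha_mem)
  have hI₂ := hint.mono_set (uIcc_subset_uIcc_right ha_mem)
  have hφat : IntervalIntegrable (fun s => φ (t - s)) volume a t := by
    simpa only [sub_sub_cancel, sub_zero] using (hφt.comp_sub_left t).symm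
  have hvanish : ∫ s in 0..a, φ (t - s) * u s = 0 := by
    refine (intervalIntegral.integral_congr fun s hs => ?_).trans intervalIntegral.integral_zero
    rw [uIcc_of_le ha] at hs
    simp [hzero s hs]
  rw [← intervalIntegral.integral_add_adjacent_intervals hI₁ hI₂, hvanish, zero_add]
  calc |∫ s in a..t, φ (t - s) * u s|
      ≤ ∫ s in a..t, |φ (t - s) * u s| := intervalIntegral.abs_integral_le_integral_abs hat
    _ ≤ ∫ s in a..t, φ (t - s) * D := by
        refine intervalIntegral.integral_mono_on hat hI₂.abs (hφat.mul_const D) fun s hs => ?_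
        rw [abs_mul, abs_of_nonneg (hφ₀ _)]
        exact mul_le_mul_of_nonneg_left (hD s hs) (hφ₀ _)
    _ = D * ∫ s in 0..(t - a), φ s := by
        rw [intervalIntegral.integral_mul_const, intervalIntegral.integral_comp_sub_left
          (fun s => φ s) t, sub_self, mul_comm]

theorem eq_zero_on_Icc_add_of_eq_zero_on_Icc {A a δ : ℝ} (hφ₀ : ∀ s, 0 ≤ φ s)
    (hφ : ∀ t ≥ (0:ℝ), IntegrableOn φ (Icc 0 t)) (hu : AEStronglyMeasurable u)
    (hub : LocallyBoundedOnNonneg u) (hueq : ∀ t ≥ (0:ℝ), u t = A * ∫ s in 0..t, φ (t - s) * u s)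
    (ha : 0 ≤ a) (hδ : 0 ≤ δ) (hAδ : |A| * ∫ s in 0..δ, φ s < 1)
    (hzero : ∀ s ∈ Icc 0 a, u s = 0) : ∀ s ∈ Icc 0 (a + δ), u s = 0 := by
  have hφint : ∀ r ≥ (0:ℝ), IntervalIntegrable φ volume 0 r := fun r hr =>
    (intervalIntegrable_iff_integrableOn_Icc_of_le hr).2 (hφ r hr)
  obtain ⟨C, hC⟩ := hub (a + δ) (by positivity)
  have hnear : ∀ s ∈ Icc a (a + δ), ‖u s‖ = 0 := by
    refine norm_eq_zero_of_forall_norm_le_mul (mul_nonneg (abs_nonneg A)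
      (intervalIntegral.integral_nonneg hδ fun s _ => hφ₀ s)) hAδ
      (fun s hs => hC s ⟨ha.trans hs.1, hs.2⟩) fun D hD t ht => ?_
    have ht₀ : 0 ≤ t := ha.trans ht.1
    obtain ⟨Ct, hCt⟩ := hub t ht₀
    have hint := intervalIntegrable_comp_sub_mul ht₀ (hφ t ht₀) hu hCt
    have hkernel : ∫ s in 0..(t - a), φ s ≤ ∫ s in 0..δ, φ s :=
      intervalIntegral.integral_mono_interval le_rfl (sub_nonneg.2 ht.1) (by linarith [ht.2])
        (Eventually.of_forall hφ₀) (hφint δ hδ)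
    have hD₀ : 0 ≤ D := (norm_nonneg _).trans (hD t ht)
    rw [Real.norm_eq_abs, hueq t ht₀, abs_mul]
    calc |A| * |∫ s in 0..t, φ (t - s) * u s|
        ≤ |A| * (D * ∫ s in 0..(t - a), φ s) := by
          refine mul_le_mul_of_nonneg_left (abs_integral_comp_sub_mul_le hφ₀ ha ht.1 hint
            (hφint _ (sub_nonneg.2 ht.1)) hzero fun s hs => ?_) (abs_nonneg A)
          simpa only [Real.norm_eq_abs] using hD s ⟨hs.1, hs.2.trans ht.2⟩
      _ ≤ |A| * (D * ∫ s in 0..δ, φ s) := by gcongr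
      _ = (|A| * ∫ s in 0..δ, φ s) * D := by ring
  intro s hs
  rcases le_total s a with hsa | has
  · exact hzero s ⟨hs.1, hsa⟩
  · exact norm_eq_zero.1 (hnear s ⟨has, hs.2⟩)

theorem eq_zero_of_eq_mul_integral_comp_sub_mul {A : ℝ} (hφ₀ : ∀ s, 0 ≤ φ s)
    (hφ : ∀ t ≥ (0:ℝ), IntegrableOn φ (Icc 0 t)) (hu : AEStronglyMeasurable u)
    (hub : LocallyBoundedOnNonneg u) (hueq : ∀ t ≥ (0:ℝ), u t = A * ∫ s in 0..t, φ (t - s) * u s) :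
    ∀ t ≥ (0:ℝ), u t = 0 := by
  have hsmall : Tendsto (fun δ => |A| * ∫ s in 0..δ, φ s) (𝓝[>] 0) (𝓝 0) := by
    have hcont := intervalIntegral.continuousWithinAt_primitive (a := 0) (b₀ := 0) (b₁ := 0)
      (b₂ := 1) Real.volume_singleton (by simpa using
        (intervalIntegrable_iff_integrableOn_Icc_of_le zero_le_one).2 (hφ 1 zero_le_one))
    rw [← nhdsWithin_Ioc_eq_nhdsGT zero_lt_one]
    simpa using ((hcont.tendsto.mono_left (nhdsWithin_mono _ Ioc_subset_Icc_self)).const_mul |A|)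
  obtain ⟨δ, hAδ, hδ⟩ := ((hsmall.eventually (gt_mem_nhds one_pos)).and self_mem_nhdsWithin).exists
  have hstep : ∀ k : ℕ, ∀ s ∈ Icc 0 (k * δ), u s = 0 := by
    intro k
    induction k with
    | zero =>
      intro s hs
      obtain rfl : s = 0 := by simpa using hs
      rw [hueq 0 le_rfl, intervalIntegral.integral_same, mul_zero]
    | succ k ih =>
      rw [Nat.cast_succ, add_one_mul]
      exact eq_zero_on_Icc_add_of_eq_zero_on_Icc hφ₀ hφ hu hub hueq (by positivity) hδ.le hAδ ih
  intro t ht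
  obtain ⟨k, hk⟩ := exists_nat_gt (t / δ)
  exact hstep k t ⟨ht, ((div_lt_iff₀ hδ).1 hk).le⟩

end Volterra

theorem stmt12_general
    (A : ℝ) (g : ℝ → ℝ)
    (φ : ℝ → ℝ) (hφnonneg : ∀ s, 0 ≤ φ s)
    (hφloc : ∀ t ≥ (0:ℝ), IntegrableOn φ (Set.Icc 0 t))
    (f f' : ℝ → ℝ)
    (hfmeas : Measurable f) (hf'meas : Measurable f')
    (hfb : ∀ t ≥ (0:ℝ), ∃ C, ∀ s ∈ Set.Icc (0:ℝ) t, |f s| ≤ C)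
    (hf'b : ∀ t ≥ (0:ℝ), ∃ C, ∀ s ∈ Set.Icc (0:ℝ) t, |f' s| ≤ C)
    (hfeq : ∀ t ≥ (0:ℝ), f t = g t + A * ∫ s in (0:ℝ)..t, φ (t - s) * f s)
    (hf'eq : ∀ t ≥ (0:ℝ), f' t = g t + A * ∫ s in (0:ℝ)..t, φ (t - s) * f' s) :
    ∀ t ≥ (0:ℝ), f t = f' t := by
  have hdiff : ∀ t ≥ (0:ℝ), (f - f') t = A * ∫ s in (0:ℝ)..t, φ (t - s) * (f - f') s := by
    intro t ht
    obtain ⟨C, hC⟩ := hfb t ht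
    obtain ⟨C', hC'⟩ := hf'b t ht
    simp only [Pi.sub_apply, mul_sub]
    rw [intervalIntegral.integral_sub
      (intervalIntegrable_comp_sub_mul ht (hφloc t ht) hfmeas.aestronglyMeasurable hC)
      (intervalIntegrable_comp_sub_mul ht (hφloc t ht) hf'meas.aestronglyMeasurable hC'),
      hfeq t ht, hf'eq t ht]
    ring
  intro t ht
  exact sub_eq_zero.1 (eq_zero_of_eq_mul_integral_comp_sub_mul hφnonneg hφloc
    (hfmeas.sub hf'meas).aestronglyMeasurable (LocallyBoundedOnNonneg.sub hfb hf'b) hdiff t ht)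

theorem stmt12
    (A : ℝ) (g : ℝ → ℝ) (hgmeas : Measurable g)
    (hgb : ∀ t ≥ (0:ℝ), ∃ C, ∀ s ∈ Set.Icc (0:ℝ) t, |g s| ≤ C)
    (φ : ℝ → ℝ) (hφmeas : Measurable φ) (hφnonneg : ∀ s, 0 ≤ φ s)
    (hφloc : ∀ t ≥ (0:ℝ), IntegrableOn φ (Set.Icc 0 t))
    (f f' : ℝ → ℝ)
    (hfmeas : Measurable f) (hf'meas : Measurable f')
    (hfb : ∀ t ≥ (0:ℝ), ∃ C, ∀ s ∈ Set.Icc (0:ℝ) t, |f s| ≤ C)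
    (hf'b : ∀ t ≥ (0:ℝ), ∃ C, ∀ s ∈ Set.Icc (0:ℝ) t, |f' s| ≤ C)
    (hfeq : ∀ t ≥ (0:ℝ), f t = g t + A * ∫ s in (0:ℝ)..t, φ (t - s) * f s)
    (hf'eq : ∀ t ≥ (0:ℝ), f' t = g t + A * ∫ s in (0:ℝ)..t, φ (t - s) * f' s) :
    ∀ t ≥ (0:ℝ), f t = f' t :=
  stmt12_general A g φ hφnonneg hφloc f f' hfmeas hf'meas hfb hf'b hfeq hf'eq
end

section
/- Let φ : [0,∞) → [0,∞) be a measurable probability density with ∫_0^∞ φ(s) ds = 1 and finite positive mean m = ∫_0^∞ s φ(s) ds ∈ (0,∞), let a > 1, μ > 0, and let u : [0,∞) → ℝ be a locally bounded measurable solution of u(t) = μ t + a ∫_0^t φ(t−s) u(s) ds for all t ≥ 0. Then u(t) = μ t + μ ∫_0^t s Ψ(t−s) ds for all t ≥ 0, where Ψ(t) = ∑_{n≥1} (a φ)^{*n}(t). -/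
/-!
Write `g = a φ` and `f t = μ t`, so that the equation reads `u = f + g ⋆ u` on `[0, t]`.
Iterating it gives `u = f + ∑_{n < N} g^{*(n+1)} ⋆ f + g^{*(N+1)} ⋆ u`, and the remainder is at
most `sup_{[0,t]} |u| · ∫_0^t g^{*(N+1)}`. Multiplying by `e^{-l s}` commutes with causal
convolution, so `∫_0^t g^{*n} ≤ e^{l t} (∫ e^{-l s} g(s) ds)^n`; by dominated convergence the
last integral is `< 1` for `l` large. Hence the remainder tends to `0` and the Neumann series
converges, which is the claim. After truncating `u` and `f` to `[0, t]`, every function vanishes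
on `(-∞, 0)`, where the causal convolution `∫_0^t ψ(t - s) v(s) ds` is Mathlib's convolution,
so its associativity is available.
-/

open MeasureTheory Filter Topology

open Set ContinuousLinearMap
open scoped Convolution

theorem integrable_of_integrableOn_Ioi {ψ : ℝ → ℝ} (hψ : ∀ s < 0, ψ s = 0)
    (hψi : IntegrableOn ψ (Ioi 0)) : Integrable ψ := by
  rw [← integrableOn_univ, ← Iio_union_Ici]
  exact (integrableOn_zero.congr_fun (fun s hs => (hψ s hs).symm) measurableSet_Iio).union
    ((integrableOn_Ici_iff_integrableOn_Ioi (f := ψ)).2 hψi)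

theorem abs_indicator_Icc_le {f : ℝ → ℝ} {t C : ℝ} (hC : 0 ≤ C)
    (hfC : ∀ s ∈ Icc 0 t, |f s| ≤ C) (s : ℝ) : |(Icc 0 t).indicator f s| ≤ C := by
  by_cases hs : s ∈ Icc 0 t <;> simp [hs, hfC, hC]

theorem indicator_Icc_of_neg {f : ℝ → ℝ} {t s : ℝ} (hs : s < 0) : (Icc 0 t).indicator f s = 0 :=
  indicator_of_notMem (fun h => (not_le.2 hs) h.1) f

section Causal

variable {ψ v : ℝ → ℝ}

theorem convolution_eq_zero_of_neg (hψ : ∀ s < 0, ψ s = 0) (hv : ∀ s < 0, v s = 0) {t : ℝ}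
    (ht : t < 0) : (v ⋆ ψ) t = 0 := by
  rw [convolution_lsmul]
  refine integral_eq_zero_of_ae (ae_of_all _ fun s => ?_)
  rcases lt_or_ge s 0 with hs | hs
  · simp [hv s hs]
  · simp [hψ (t - s) (by linarith)]

theorem intervalIntegral_eq_convolution (hψ : ∀ s < 0, ψ s = 0) (hv : ∀ s < 0, v s = 0)
    (t : ℝ) : ∫ s in (0:ℝ)..t, ψ (t - s) * v s = (v ⋆ ψ) t := by
  rcases lt_or_ge t 0 with ht | ht
  · rw [convolution_eq_zero_of_neg hψ hv ht, intervalIntegral.integral_of_ge ht.le, neg_eq_zero]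
    refine setIntegral_eq_zero_of_forall_eq_zero fun s hs => ?_
    rw [hψ (t - s) (by linarith [hs.1]), zero_mul]
  rw [convolution_lsmul, intervalIntegral.integral_of_le ht, ← integral_Icc_eq_integral_Ioc,
    setIntegral_eq_integral_of_forall_compl_eq_zero]
  · simp only [smul_eq_mul, mul_comm]
  · intro s hs
    rcases not_and_or.mp hs with hs | hs
    · rw [hv s (not_le.mp hs), mul_zero]
    · rw [hψ (t - s) (by linarith [not_le.mp hs]), zero_mul]

theorem convolution_lsmul_comm : v ⋆ ψ = ψ ⋆ v := by
  ext t
  rw [convolution_lsmul, convolution_lsmul_swap]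
  simp only [smul_eq_mul, mul_comm]

end Causal

section ConvPow

variable {ψ : ℝ → ℝ}

theorem convPow_of_neg (hψ : ∀ s < 0, ψ s = 0) : ∀ n, ∀ t < (0:ℝ), convPow ψ n t = 0
  | 0 => hψ
  | n + 1 => fun t ht => by
    change ∫ s in (0:ℝ)..t, ψ (t - s) * convPow ψ n s = 0
    rw [intervalIntegral_eq_convolution hψ (convPow_of_neg hψ n)]
    exact convolution_eq_zero_of_neg hψ (convPow_of_neg hψ n) ht

theorem convPow_succ_eq_convolution (hψ : ∀ s < 0, ψ s = 0) (n : ℕ) :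
    convPow ψ (n + 1) = convPow ψ n ⋆ ψ :=
  funext (intervalIntegral_eq_convolution hψ (convPow_of_neg hψ n))

theorem convPow_nonneg (hψ : ∀ s < 0, ψ s = 0) (hψ0 : ∀ s, 0 ≤ ψ s) :
    ∀ n t, 0 ≤ convPow ψ n t
  | 0 => hψ0
  | n + 1 => fun t => by
    rcases lt_or_ge t 0 with ht | ht
    · rw [convPow_of_neg hψ (n + 1) t ht]
    · exact intervalIntegral.integral_nonneg ht fun s _ =>
        mul_nonneg (hψ0 _) (convPow_nonneg hψ hψ0 n s)

theorem integrable_convPow (hψ : ∀ s < 0, ψ s = 0) (hψi : Integrable ψ) :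
    ∀ n, Integrable (convPow ψ n)
  | 0 => hψi
  | n + 1 => by
    rw [convPow_succ_eq_convolution hψ]
    exact (integrable_convPow hψ hψi n).integrable_convolution _ hψi

theorem integral_convPow (hψ : ∀ s < 0, ψ s = 0) (hψi : Integrable ψ) :
    ∀ n, ∫ t, convPow ψ n t = (∫ t, ψ t) ^ (n + 1)
  | 0 => by simp [convPow]
  | n + 1 => by
    rw [convPow_succ_eq_convolution hψ, integral_convolution _ (integrable_convPow hψ hψi n) hψi,
      integral_convPow hψ hψi n, lsmul_apply, smul_eq_mul, pow_succ _ (n + 1)]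

theorem convPow_exp_mul (l : ℝ) (ψ : ℝ → ℝ) :
    ∀ n t, convPow (fun s => Real.exp (-(l * s)) * ψ s) n t = Real.exp (-(l * t)) * convPow ψ n t
  | 0, _ => rfl
  | n + 1, t => by
    simp only [convPow, convPow_exp_mul l ψ n, ← intervalIntegral.integral_const_mul]
    refine intervalIntegral.integral_congr fun s _ => ?_
    have : Real.exp (-(l * t)) = Real.exp (-(l * (t - s))) * Real.exp (-(l * s)) := by
      rw [← Real.exp_add]; ring_nf
    simp only [this]
    ring

end ConvPow

section Tilt

variable {ψ : ℝ → ℝ}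

theorem norm_exp_mul_le (hψ : ∀ s < 0, ψ s = 0) {l : ℝ} (hl : 0 ≤ l) (s : ℝ) :
    ‖Real.exp (-(l * s)) * ψ s‖ ≤ ‖ψ s‖ := by
  rcases lt_or_ge s 0 with hs | hs
  · simp [hψ s hs]
  · rw [norm_mul, Real.norm_of_nonneg (Real.exp_nonneg _)]
    exact mul_le_of_le_one_left (norm_nonneg _) (Real.exp_le_one_iff.2 (by nlinarith))

theorem integrable_exp_mul (hψ : ∀ s < 0, ψ s = 0) (hψi : Integrable ψ) {l : ℝ} (hl : 0 ≤ l) :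
    Integrable fun s => Real.exp (-(l * s)) * ψ s :=
  hψi.mono ((Real.continuous_exp.comp (by fun_prop)).aestronglyMeasurable.mul
    hψi.aestronglyMeasurable) (ae_of_all _ (norm_exp_mul_le hψ hl))

theorem exists_integral_exp_mul_lt_one (hψ : ∀ s < 0, ψ s = 0) (hψi : Integrable ψ) :
    ∃ l, 0 ≤ l ∧ ∫ s, Real.exp (-(l * s)) * ψ s < 1 := by
  have hlim : Tendsto (fun n : ℕ => ∫ s, Real.exp (-(n * s)) * ψ s) atTop (𝓝 0) := by
    rw [← integral_zero ℝ ℝ]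
    refine tendsto_integral_of_dominated_convergence (fun s => ‖ψ s‖)
      (fun n => (integrable_exp_mul hψ hψi n.cast_nonneg).aestronglyMeasurable) hψi.norm
      (fun n => ae_of_all _ (norm_exp_mul_le hψ n.cast_nonneg)) ?_
    filter_upwards [measure_eq_zero_iff_ae_notMem.1 (measure_singleton (0:ℝ))] with s hs
    rcases lt_or_gt_of_ne (Set.mem_singleton_iff.not.1 hs) with hs | hs
    · simp [hψ s hs]
    · simpa using (Real.tendsto_exp_neg_atTop_nhds_zero.comp
        (tendsto_natCast_atTop_atTop.atTop_mul_const hs)).mul_const (ψ s)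
  obtain ⟨n, hn⟩ := (hlim.eventually_lt_const one_pos).exists
  exact ⟨n, n.cast_nonneg, hn⟩

theorem intervalIntegral_convPow_le (hψ : ∀ s < 0, ψ s = 0) (hψ0 : ∀ s, 0 ≤ ψ s)
    (hψi : Integrable ψ) {l t : ℝ} (hl : 0 ≤ l) (ht : 0 ≤ t) (n : ℕ) :
    ∫ s in (0:ℝ)..t, convPow ψ n s
      ≤ Real.exp (l * t) * (∫ s, Real.exp (-(l * s)) * ψ s) ^ (n + 1) := by
  set ψl := fun s => Real.exp (-(l * s)) * ψ s
  have hψl : ∀ s < 0, ψl s = 0 := fun s hs => by simp [ψl, hψ s hs]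
  have hψli : Integrable ψl := integrable_exp_mul hψ hψi hl
  have hql0 := convPow_nonneg hψl (fun s => mul_nonneg (Real.exp_nonneg _) (hψ0 s)) n
  calc ∫ s in (0:ℝ)..t, convPow ψ n s
      ≤ ∫ s in (0:ℝ)..t, Real.exp (l * t) * convPow ψl n s := by
        refine intervalIntegral.integral_mono_on ht
          (integrable_convPow hψ hψi n).intervalIntegrable
          ((integrable_convPow hψl hψli n).intervalIntegrable.const_mul _) fun s hs => ?_
        rw [convPow_exp_mul, ← mul_assoc, ← Real.exp_add]
        exact le_mul_of_one_le_left (convPow_nonneg hψ hψ0 n s)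
          (Real.one_le_exp (by nlinarith [hs.2]))
    _ ≤ Real.exp (l * t) * ∫ s, convPow ψl n s := by
        rw [intervalIntegral.integral_const_mul, intervalIntegral.integral_of_le ht]
        exact mul_le_mul_of_nonneg_left (setIntegral_le_integral (integrable_convPow hψl hψli n)
          (ae_of_all _ hql0)) (Real.exp_nonneg _)
    _ = _ := by rw [integral_convPow hψl hψli]

theorem summable_intervalIntegral_convPow (hψ : ∀ s < 0, ψ s = 0)
    (hψ0 : ∀ s, 0 ≤ ψ s) (hψi : Integrable ψ) {t : ℝ} (ht : 0 ≤ t) :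
    Summable fun n => ∫ s in (0:ℝ)..t, convPow ψ n s := by
  obtain ⟨l, hl, hr⟩ := exists_integral_exp_mul_lt_one hψ hψi
  have hr0 : 0 ≤ ∫ s, Real.exp (-(l * s)) * ψ s :=
    integral_nonneg fun s => mul_nonneg (Real.exp_nonneg _) (hψ0 s)
  refine Summable.of_nonneg_of_le
    (fun n => intervalIntegral.integral_nonneg ht fun s _ => convPow_nonneg hψ hψ0 n s)
    (intervalIntegral_convPow_le hψ hψ0 hψi hl ht) ?_
  simp_rw [pow_succ']
  exact ((summable_geometric_of_lt_one hr0 hr).mul_left _).mul_left _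

end Tilt

section Renewal

variable {g k v w : ℝ → ℝ} {t C : ℝ}

theorem abs_convolution_le (ht : 0 ≤ t) (hk : ∀ s < 0, k s = 0) (hk0 : ∀ s, 0 ≤ k s)
    (hki : Integrable k) (hv : ∀ s < 0, v s = 0) (hvC : ∀ s ∈ Icc 0 t, |v s| ≤ C) :
    |(v ⋆ k) t| ≤ C * ∫ s in (0:ℝ)..t, k s := by
  rw [← intervalIntegral_eq_convolution hk hv, ← Real.norm_eq_abs]
  calc ‖∫ s in (0:ℝ)..t, k (t - s) * v s‖ ≤ ∫ s in (0:ℝ)..t, C * k (t - s) := by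
        refine intervalIntegral.norm_integral_le_of_norm_le ht (ae_of_all _ fun s hs => ?_)
          ((hki.comp_sub_left t).intervalIntegrable.const_mul C)
        rw [norm_mul, Real.norm_of_nonneg (hk0 _), mul_comm]
        exact mul_le_mul_of_nonneg_right (hvC s (Ioc_subset_Icc_self hs)) (hk0 _)
    _ = C * ∫ s in (0:ℝ)..t, k s := by
        rw [intervalIntegral.integral_const_mul, intervalIntegral.integral_comp_sub_left]
        simp

theorem convolutionExistsAt_of_bounded (L : ℝ →L[ℝ] ℝ →L[ℝ] ℝ) (hv : AEStronglyMeasurable v)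
    (hvC : ∀ s, |v s| ≤ C) (hki : Integrable k) (x : ℝ) : ConvolutionExistsAt v k x L :=
  ConvolutionExistsAt.of_norm L ((hki.norm.comp_sub_left x).bdd_mul hv.norm
    (ae_of_all _ fun s => by simpa using hvC s)) hv hki.aestronglyMeasurable

theorem convolution_renewal_step (hg : ∀ s < 0, g s = 0) (hgi : Integrable g)
    (hk : ∀ s < 0, k s = 0) (hki : Integrable k) (hv : ∀ s < 0, v s = 0) (hvi : Integrable v)
    (hvC : ∀ s, |v s| ≤ C) (hw : ∀ s < 0, w s = 0) (hwm : AEStronglyMeasurable w)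
    (hwC : ∀ s, |w s| ≤ C) (heq : ∀ s ∈ Icc 0 t, v s = w s + (v ⋆ g) s) :
    (v ⋆ k) t = (w ⋆ k) t + (v ⋆ (g ⋆ k)) t := by
  have hpt : ∀ r, (v ⋆ g) r • k (t - r) = v r • k (t - r) - w r • k (t - r) := by
    intro r
    rcases lt_or_ge r 0 with hr | hr
    · simp [hv r hr, hw r hr, convolution_eq_zero_of_neg hg hv hr]
    rcases lt_or_ge t r with hrt | hrt
    · simp [hk (t - r) (by linarith)]
    rw [heq r ⟨hr, hrt⟩]
    simp only [smul_eq_mul]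
    ring
  have hassoc : ((v ⋆ g) ⋆ k) t = (v ⋆ (g ⋆ k)) t := by
    refine convolution_assoc _ _ _ _ (fun x y z => smul_assoc x y z) hvi.aestronglyMeasurable
      hgi.aestronglyMeasurable hki.aestronglyMeasurable (hvi.ae_convolution_exists _ hgi)
      (hgi.norm.ae_convolution_exists _ hki.norm) ?_
    exact convolutionExistsAt_of_bounded _ hvi.aestronglyMeasurable.norm (C := C)
      (fun s => by simpa using hvC s) (hgi.norm.integrable_convolution _ hki.norm) t
  have hsub := integral_sub
    (convolutionExistsAt_of_bounded (lsmul ℝ ℝ) hvi.aestronglyMeasurable hvC hki t)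
    (convolutionExistsAt_of_bounded (lsmul ℝ ℝ) hwm hwC hki t)
  simp only [lsmul_apply] at hsub
  rw [← hassoc, convolution_lsmul, convolution_lsmul, convolution_lsmul, funext hpt, hsub]
  ring

theorem hasSum_convolution_convPow (hg : ∀ s < 0, g s = 0) (hg0 : ∀ s, 0 ≤ g s)
    (hgi : Integrable g) (ht : 0 ≤ t) (hv : ∀ s < 0, v s = 0) (hvi : Integrable v)
    (hvC : ∀ s, |v s| ≤ C) (hw : ∀ s < 0, w s = 0) (hwm : AEStronglyMeasurable w)
    (hwC : ∀ s, |w s| ≤ C) (heq : ∀ s ∈ Icc 0 t, v s = w s + (v ⋆ g) s) :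
    HasSum (fun n => (w ⋆ convPow g n) t) (v t - w t) := by
  have hI := summable_intervalIntegral_convPow hg hg0 hgi ht
  have hbound : ∀ x : ℝ → ℝ, (∀ s < 0, x s = 0) → (∀ s, |x s| ≤ C) → ∀ n,
      ‖(x ⋆ convPow g n) t‖ ≤ C * ∫ s in (0:ℝ)..t, convPow g n s := fun x hx hxC n =>
    abs_convolution_le ht (convPow_of_neg hg n) (convPow_nonneg hg hg0 n)
      (integrable_convPow hg hgi n) hx fun s _ => hxC s
  have hstep : ∀ N, (v ⋆ convPow g N) t = (w ⋆ convPow g N) t + (v ⋆ convPow g (N + 1)) t := by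
    intro N
    rw [convPow_succ_eq_convolution hg, convolution_lsmul_comm (v := convPow g N)]
    exact convolution_renewal_step hg hgi (convPow_of_neg hg N) (integrable_convPow hg hgi N)
      hv hvi hvC hw hwm hwC heq
  have hpartial : ∀ N,
      ∑ n ∈ Finset.range N, (w ⋆ convPow g n) t = v t - w t - (v ⋆ convPow g N) t := by
    intro N
    induction N with
    | zero => simp [heq t ⟨ht, le_rfl⟩, convPow]
    | succ N ih => rw [Finset.sum_range_succ, ih, hstep N]; ring
  have hrem : Tendsto (fun N => (v ⋆ convPow g N) t) atTop (𝓝 0) :=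
    squeeze_zero_norm (hbound v hv hvC) (by simpa using hI.tendsto_atTop_zero.const_mul C)
  rw [hasSum_iff_tendsto_nat_of_summable_norm
    (hI.mul_left C |>.of_nonneg_of_le (fun _ => norm_nonneg _) (hbound w hw hwC))]
  simpa [hpartial] using tendsto_const_nhds.sub hrem

theorem tsum_convolution_convPow (hg : ∀ s < 0, g s = 0) (hg0 : ∀ s, 0 ≤ g s)
    (hgi : Integrable g) (ht : 0 ≤ t) (hw : ∀ s < 0, w s = 0) (hwm : AEStronglyMeasurable w)
    (hwC : ∀ s, |w s| ≤ C) :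
    ∑' n, (w ⋆ convPow g n) t = (w ⋆ fun s => ∑' n, convPow g n s) t := by
  have hnorm : ∀ n, ∫ s, ‖w s * convPow g n (t - s)‖ ≤ C * ∫ s in (0:ℝ)..t, convPow g n s := by
    intro n
    have h := abs_convolution_le ht (convPow_of_neg hg n) (convPow_nonneg hg hg0 n)
      (integrable_convPow hg hgi n) (v := fun s => |w s|) (fun s hs => by simp [hw s hs])
      (fun s _ => by simpa using hwC s)
    rw [convolution_lsmul] at h
    refine (integral_congr_ae (ae_of_all _ fun s => ?_)).trans_le ((le_abs_self _).trans h)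
    simp [abs_of_nonneg (convPow_nonneg hg hg0 n (t - s))]
  simp only [convolution_lsmul, smul_eq_mul, ← tsum_mul_left]
  exact integral_tsum_of_summable_integral_norm
    (fun n => convolutionExistsAt_of_bounded (lsmul ℝ ℝ) hwm hwC (integrable_convPow hg hgi n) t)
    ((summable_intervalIntegral_convPow hg hg0 hgi ht).mul_left C |>.of_nonneg_of_le
      (fun _ => integral_nonneg fun _ => norm_nonneg _) hnorm)

end Renewal

theorem renewal_solution {g u f : ℝ → ℝ} {t C : ℝ} (hg : ∀ s < 0, g s = 0)
    (hg0 : ∀ s, 0 ≤ g s) (hgi : Integrable g) (ht : 0 ≤ t) (hu : Measurable u)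
    (hf : Measurable f) (huC : ∀ s ∈ Icc 0 t, |u s| ≤ C) (hfC : ∀ s ∈ Icc 0 t, |f s| ≤ C)
    (heq : ∀ s ∈ Icc 0 t, u s = f s + ∫ r in (0:ℝ)..s, g (s - r) * u r) :
    u t = f t + ∫ s in (0:ℝ)..t, (∑' n, convPow g n (t - s)) * f s := by
  have hC : 0 ≤ C := (abs_nonneg _).trans (huC t ⟨ht, le_rfl⟩)
  have htt : t ∈ Icc 0 t := ⟨ht, le_rfl⟩
  set v := (Icc 0 t).indicator u
  set w := (Icc 0 t).indicator f
  have hv : ∀ s < 0, v s = 0 := fun s hs => indicator_Icc_of_neg hs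
  have hw : ∀ s < 0, w s = 0 := fun s hs => indicator_Icc_of_neg hs
  have hvC := abs_indicator_Icc_le hC huC
  have hvi : Integrable v := (integrable_indicator_iff measurableSet_Icc).2 <|
    IntegrableOn.of_bound measure_Icc_lt_top hu.aestronglyMeasurable.restrict C
      ((ae_restrict_iff' measurableSet_Icc).2 (ae_of_all _ fun s hs => by
        simpa using huC s hs))
  have heqv : ∀ s ∈ Icc 0 t, v s = w s + (v ⋆ g) s := by
    intro s hs
    rw [show v s = u s from indicator_of_mem hs u, show w s = f s from indicator_of_mem hs f,
      ← intervalIntegral_eq_convolution hg hv, heq s hs]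
    congr 1
    refine intervalIntegral.integral_congr fun r hr => ?_
    rw [uIcc_of_le hs.1] at hr
    rw [show v r = u r from indicator_of_mem (show r ∈ Icc 0 t from ⟨hr.1, hr.2.trans hs.2⟩) u]
  have hΨ : ∀ s < 0, ∑' n, convPow g n s = 0 := fun s hs => by simp [convPow_of_neg hg _ s hs]
  have hsum := hasSum_convolution_convPow hg hg0 hgi ht hv hvi hvC hw
    (hf.indicator measurableSet_Icc).aestronglyMeasurable (abs_indicator_Icc_le hC hfC) heqv
  calc u t = f t + (v t - w t) := by
        rw [show v t = u t from indicator_of_mem htt u, show w t = f t from indicator_of_mem htt f]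
        ring
    _ = _ := by
        rw [← hsum.tsum_eq, tsum_convolution_convPow hg hg0 hgi ht hw
          (hf.indicator measurableSet_Icc).aestronglyMeasurable (abs_indicator_Icc_le hC hfC),
          ← intervalIntegral_eq_convolution hΨ hw]
        congr 1
        refine intervalIntegral.integral_congr fun s hs => ?_
        rw [uIcc_of_le ht] at hs
        rw [show w s = f s from indicator_of_mem hs f]

theorem stmt15_general
    (φ : ℝ → ℝ) (hφnonneg : ∀ s, 0 ≤ φ s)
    (hφneg : ∀ s < (0:ℝ), φ s = 0)
    (hφint : IntegrableOn φ (Set.Ioi 0))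
    (a : ℝ) (ha : 1 < a) (μ : ℝ)
    (u : ℝ → ℝ) (humeas : Measurable u)
    (hub : ∀ t ≥ (0:ℝ), ∃ C, ∀ s ∈ Set.Icc (0:ℝ) t, |u s| ≤ C)
    (hueq : ∀ t ≥ (0:ℝ), u t = μ * t + a * ∫ s in (0:ℝ)..t, φ (t - s) * u s) :
    ∀ t ≥ (0:ℝ),
      u t = μ * t + μ * ∫ s in (0:ℝ)..t,
        s * (∑' n : ℕ, convPow (fun r => a * φ r) n (t - s)) := by
  intro t ht
  obtain ⟨C, hC⟩ := hub t ht
  have key := renewal_solution (g := fun r => a * φ r) (f := fun s => μ * s) (C := max C (|μ| * t))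
    (fun s hs => by simp [hφneg s hs]) (fun s => mul_nonneg (by linarith) (hφnonneg s))
    ((integrable_of_integrableOn_Ioi hφneg hφint).const_mul a) ht humeas (by fun_prop)
    (fun s hs => (hC s hs).trans (le_max_left _ _))
    (fun s hs => by
      rw [abs_mul, abs_of_nonneg hs.1]
      exact (mul_le_mul_of_nonneg_left hs.2 (abs_nonneg μ)).trans (le_max_right _ _))
    (fun s hs => by
      rw [hueq s hs.1, ← intervalIntegral.integral_const_mul]
      simp only [mul_assoc])
  rw [key, ← intervalIntegral.integral_const_mul]
  congr 1
  refine intervalIntegral.integral_congr fun s _ => ?_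
  ring

theorem stmt15
    (φ : ℝ → ℝ) (hφmeas : Measurable φ) (hφnonneg : ∀ s, 0 ≤ φ s)
    (hφneg : ∀ s < (0:ℝ), φ s = 0)
    (hφint : IntegrableOn φ (Set.Ioi 0))
    (hφ1 : ∫ s in Set.Ioi (0:ℝ), φ s = 1)
    (m : ℝ) (hm : 0 < m)
    (hmint : IntegrableOn (fun s => s * φ s) (Set.Ioi 0))
    (hmval : ∫ s in Set.Ioi (0:ℝ), s * φ s = m)
    (a : ℝ) (ha : 1 < a) (μ : ℝ) (hμ : 0 < μ)
    (u : ℝ → ℝ) (humeas : Measurable u)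
    (hub : ∀ t ≥ (0:ℝ), ∃ C, ∀ s ∈ Set.Icc (0:ℝ) t, |u s| ≤ C)
    (hueq : ∀ t ≥ (0:ℝ), u t = μ * t + a * ∫ s in (0:ℝ)..t, φ (t - s) * u s) :
    ∀ t ≥ (0:ℝ),
      u t = μ * t + μ * ∫ s in (0:ℝ)..t,
        s * (∑' n : ℕ, convPow (fun r => a * φ r) n (t - s)) :=
  stmt15_general φ hφnonneg hφneg hφint a ha μ u humeas hub hueq
end

section
/- Let φ : [0,∞) → [0,∞) be a measurable probability density with ∫_0^∞ φ(s) ds = 1 and finite positive mean m = ∫_0^∞ s φ(s) ds ∈ (0,∞), let μ > 0, let T > 0, let a > 1, let b > 0 satisfy ∫_0^∞ e^{−bs} a φ(s) ds = 1/a, and let u : [0,∞) → ℝ be the unique locally bounded measurable solution of u(t) = μ t + a ∫_0^t φ(t−s) u(s) ds for all t ≥ 0. Then for every x ∈ [0,1], ((a − 1)/(T e^{bTx})) u(Tx) ≤ μ a. -/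
/-!
Discount by `e^{-bs}`. If `M` is the supremum of `e^{-bs} |u s|` over `[0, T]`, the renewal
equation gives `e^{-bt} |u t| ≤ μ T + M ∫ e^{-bs} a φ(s) ds = μ T + M / a` on `[0, T]`, since
`e^{-bt} = e^{-b(t-s)} e^{-bs}` splits the convolution. Hence `M ≤ a μ T / (a - 1)`, and
`u (T x) ≤ e^{bTx} M`.
-/

open MeasureTheory Filter Real Set

section Volterra

variable {k : ℝ → ℝ} {b : ℝ}

lemma intervalIntegral_exp_neg_mul_abs_le
    (hk : IntegrableOn (fun s => exp (-b * s) * |k s|) (Ioi 0)) {t : ℝ} (ht : 0 ≤ t) :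
    ∫ s in (0:ℝ)..t, exp (-b * s) * |k s| ≤ ∫ s in Ioi (0:ℝ), exp (-b * s) * |k s| := by
  rw [intervalIntegral.integral_of_le ht]
  exact setIntegral_mono_set hk (Eventually.of_forall fun s => by positivity)
    Ioc_subset_Ioi_self.eventuallyLE

lemma abs_intervalIntegral_conv_le (hk : IntegrableOn (fun s => exp (-b * s) * |k s|) (Ioi 0))
    {u : ℝ → ℝ} {t M : ℝ} (ht : 0 ≤ t) (hM : 0 ≤ M)
    (hu : ∀ s ∈ Icc 0 t, exp (-b * s) * |u s| ≤ M) :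
    |∫ s in (0:ℝ)..t, k (t - s) * u s|
      ≤ exp (b * t) * M * ∫ s in Ioi (0:ℝ), exp (-b * s) * |k s| := by
  have hkt : IntervalIntegrable (fun s => exp (-b * s) * |k s|) volume 0 t :=
    (intervalIntegrable_iff_integrableOn_Ioc_of_le ht).mpr (hk.mono_set Ioc_subset_Ioi_self)
  calc |∫ s in (0:ℝ)..t, k (t - s) * u s|
      ≤ ∫ s in (0:ℝ)..t, exp (b * t) * M * (exp (-b * (t - s)) * |k (t - s)|) := by
        rw [← Real.norm_eq_abs]
        refine intervalIntegral.norm_integral_le_of_norm_le ht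
          (Eventually.of_forall fun s hs => ?_) ?_
        · have hus : |u s| ≤ exp (b * s) * M := by
            rw [← inv_mul_le_iff₀ (exp_pos _), ← exp_neg, ← neg_mul]
            exact hu s (Ioc_subset_Icc_self hs)
          have hexp : exp (b * s) = exp (b * t) * exp (-b * (t - s)) := by
            rw [← exp_add]; ring_nf
          rw [Real.norm_eq_abs, abs_mul,
            show exp (b * t) * M * (exp (-b * (t - s)) * |k (t - s)|)
              = |k (t - s)| * (exp (b * s) * M) by rw [hexp]; ring]
          gcongr
        · simpa using (hkt.comp_sub_left t).symm.const_mul (exp (b * t) * M)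
    _ = exp (b * t) * M * ∫ s in (0:ℝ)..t, exp (-b * s) * |k s| := by
        rw [intervalIntegral.integral_const_mul,
          intervalIntegral.integral_comp_sub_left (fun s => exp (-b * s) * |k s|)]
        simp
    _ ≤ _ := by gcongr; exact intervalIntegral_exp_neg_mul_abs_le hk ht

lemma bddAbove_exp_neg_mul_abs_image {u : ℝ → ℝ} {T C : ℝ} (hb : 0 ≤ b)
    (hu : ∀ s ∈ Icc 0 T, |u s| ≤ C) :
    BddAbove ((fun s => exp (-b * s) * |u s|) '' Icc 0 T) :=
  ⟨C, forall_mem_image.2 fun s hs =>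
    (mul_le_of_le_one_left (abs_nonneg _) (exp_le_one_iff.2 (by nlinarith [hs.1]))).trans
      (hu s hs)⟩

theorem exp_neg_mul_abs_le_of_volterra {h u : ℝ → ℝ} {T H ρ : ℝ}
    (hk : IntegrableOn (fun s => exp (-b * s) * |k s|) (Ioi 0))
    (hρ : ∫ s in Ioi (0:ℝ), exp (-b * s) * |k s| ≤ ρ) (hρ1 : ρ < 1)
    (hh : ∀ t ∈ Icc 0 T, exp (-b * t) * |h t| ≤ H)
    (hu : BddAbove ((fun s => exp (-b * s) * |u s|) '' Icc 0 T))
    (heq : ∀ t ∈ Icc 0 T, u t = h t + ∫ s in (0:ℝ)..t, k (t - s) * u s) :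
    ∀ t ∈ Icc 0 T, exp (-b * t) * |u t| ≤ H / (1 - ρ) := by
  intro t ht
  set M := sSup ((fun s => exp (-b * s) * |u s|) '' Icc 0 T)
  have hle_M : ∀ s ∈ Icc 0 T, exp (-b * s) * |u s| ≤ M :=
    fun s hs => le_csSup hu (mem_image_of_mem _ hs)
  have hM0 : 0 ≤ M := (by positivity : 0 ≤ exp (-b * t) * |u t|).trans (hle_M t ht)
  have hstep : ∀ s ∈ Icc 0 T, exp (-b * s) * |u s| ≤ H + ρ * M := by
    intro s hs
    have hconv := abs_intervalIntegral_conv_le hk hs.1 hM0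
      (fun r hr => hle_M r ⟨hr.1, hr.2.trans hs.2⟩)
    calc exp (-b * s) * |u s|
        ≤ exp (-b * s) * |h s| + exp (-b * s) * |∫ r in (0:ℝ)..s, k (s - r) * u r| := by
          rw [heq s hs, ← mul_add]; gcongr; exact abs_add_le _ _
      _ ≤ H + exp (-b * s) * (exp (b * s) * M * ρ) := by
          gcongr
          · exact hh s hs
          · exact hconv.trans (by gcongr)
      _ = H + ρ * M := by
          rw [← mul_assoc, ← mul_assoc, ← exp_add]; ring_nf; simp
  have hMle : M ≤ H + ρ * M :=
    csSup_le ⟨_, mem_image_of_mem _ ht⟩ (forall_mem_image.2 hstep)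
  rw [le_div_iff₀ (by linarith)]
  nlinarith [hle_M t ht]

end Volterra

theorem stmt17_general
    (φ : ℝ → ℝ) (hφnonneg : ∀ s, 0 ≤ φ s)
    (μ : ℝ) (hμ : 0 < μ)
    (T : ℝ) (hT : 0 < T)
    (a : ℝ) (ha : 1 < a)
    (b : ℝ) (hb : 0 < b)
    (hbeq : ∫ s in Set.Ioi (0:ℝ), Real.exp (-b * s) * (a * φ s) = 1 / a)
    (u : ℝ → ℝ)
    (hub : ∀ t ≥ (0:ℝ), ∃ C, ∀ s ∈ Set.Icc (0:ℝ) t, |u s| ≤ C)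
    (hueq : ∀ t ≥ (0:ℝ), u t = μ * t + a * ∫ s in (0:ℝ)..t, φ (t - s) * u s) :
    ∀ x ∈ Set.Icc (0:ℝ) 1,
      ((a - 1) / (T * Real.exp (b * T * x))) * u (T * x) ≤ μ * a := by
  intro x hx
  have ha0 : 0 < a := one_pos.trans ha
  have hkabs : (fun s => exp (-b * s) * |a * φ s|) = fun s => exp (-b * s) * (a * φ s) := by
    funext s; rw [abs_of_nonneg (mul_nonneg ha0.le (hφnonneg s))]
  -- a non-integrable function would have integral `0 ≠ 1 / a`
  have hk : IntegrableOn (fun s => exp (-b * s) * |a * φ s|) (Ioi 0) :=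
    hkabs ▸ Integrable.of_integral_ne_zero (hbeq ▸ by positivity)
  have hsource : ∀ t ∈ Icc 0 T, exp (-b * t) * |μ * t| ≤ μ * T := fun t ht => by
    have hμt : 0 ≤ μ * t := mul_nonneg hμ.le ht.1
    rw [abs_of_nonneg hμt]
    calc exp (-b * t) * (μ * t) ≤ μ * t :=
          mul_le_of_le_one_left hμt (exp_le_one_iff.2 (by nlinarith [ht.1]))
      _ ≤ μ * T := by gcongr; exact ht.2
  obtain ⟨C, hC⟩ := hub T hT.le
  have hbound := exp_neg_mul_abs_le_of_volterra hk (hkabs ▸ hbeq.le)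
    (by rw [div_lt_one ha0]; exact ha) hsource (bddAbove_exp_neg_mul_abs_image hb.le hC)
    (fun t ht => by rw [hueq t ht.1, ← intervalIntegral.integral_const_mul]; simp_rw [mul_assoc])
    (T * x) ⟨by nlinarith [hx.1], by nlinarith [hx.2]⟩
  have hux : u (T * x) ≤ exp (b * T * x) * (a * μ * T / (a - 1)) := by
    have hdiv : μ * T / (1 - 1 / a) = a * μ * T / (a - 1) := by field_simp
    rw [hdiv, neg_mul, exp_neg, inv_mul_le_iff₀ (exp_pos _), ← mul_assoc] at hbound
    exact (le_abs_self _).trans hbound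
  have ha1 : 0 < a - 1 := by linarith
  rw [div_mul_eq_mul_div, div_le_iff₀ (by positivity)]
  calc (a - 1) * u (T * x) ≤ (a - 1) * (exp (b * T * x) * (a * μ * T / (a - 1))) := by gcongr
    _ = μ * a * (T * exp (b * T * x)) := by field_simp

theorem stmt17
    (φ : ℝ → ℝ) (hφmeas : Measurable φ) (hφnonneg : ∀ s, 0 ≤ φ s)
    (hφneg : ∀ s < (0:ℝ), φ s = 0)
    (hφint : IntegrableOn φ (Set.Ioi 0))
    (hφ1 : ∫ s in Set.Ioi (0:ℝ), φ s = 1)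
    (m : ℝ) (hm : 0 < m)
    (hmint : IntegrableOn (fun s => s * φ s) (Set.Ioi 0))
    (hmval : ∫ s in Set.Ioi (0:ℝ), s * φ s = m)
    (μ : ℝ) (hμ : 0 < μ)
    (T : ℝ) (hT : 0 < T)
    (a : ℝ) (ha : 1 < a)
    (b : ℝ) (hb : 0 < b)
    (hbeq : ∫ s in Set.Ioi (0:ℝ), Real.exp (-b * s) * (a * φ s) = 1 / a)
    (u : ℝ → ℝ) (humeas : Measurable u)
    (hub : ∀ t ≥ (0:ℝ), ∃ C, ∀ s ∈ Set.Icc (0:ℝ) t, |u s| ≤ C)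
    (hueq : ∀ t ≥ (0:ℝ), u t = μ * t + a * ∫ s in (0:ℝ)..t, φ (t - s) * u s) :
    ∀ x ∈ Set.Icc (0:ℝ) 1,
      ((a - 1) / (T * Real.exp (b * T * x))) * u (T * x) ≤ μ * a :=
  stmt17_general φ hφnonneg μ hμ T hT a ha b hb hbeq u hub hueq
end
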